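/- arXiv:1306.6519 — 9 statements merged into one kernel-verified Lean document; each statement's English description precedes it below -/
import Mathlib

section
/- Let f, g, h ∈ 𝒟 with supp(f) ∩ J⁻(supp(h)) = ∅. Then the relative S-matrices satisfy: (i) S_g(f + h) = S_g(f)·S_g(h); (ii) S_{g+f}(h) = S_g(h); (iii) S_{g+h}(f) = S_g(h)⁻¹·S_g(f)·S_g(h), and this element also equals S_g(h)⁻¹·S_g(f + h). -/
/-!
STATEMENT 0: causal factorization properties of relative S-matrices.

Minkowski space is `M = ℝ × ℝ³` (Euclidean norm on the spatial part), with the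
causal past relation `x ≼ y ↔ y⁰ − x⁰ ≥ ‖y⃗ − x⃗‖` and `J⁻(A) = {x | ∃ y ∈ A, x ≼ y}`.
Test functions (elements of 𝒟) are smooth compactly supported maps `M → ℝᴺ`.
`S : 𝒟 → G` satisfies the causal factorization property, and the relative S-matrix is
`S_g(f) := S(g)⁻¹ · S(g + f)`.
-/

noncomputable section

/-- Minkowski space `M = ℝ × ℝ³` with Euclidean norm on the spatial part. -/
abbrev Mink : Type := ℝ × EuclideanSpace ℝ (Fin 3)

/-- Causal past relation: `x ≼ y` iff `y⁰ − x⁰ ≥ ‖y⃗ − x⃗‖`. -/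
def causalPast (x y : Mink) : Prop := ‖y.2 - x.2‖ ≤ y.1 - x.1

/-- Causal past `J⁻(A)` of a set `A ⊆ M`. -/
def Jminus (A : Set Mink) : Set Mink := {x | ∃ y ∈ A, causalPast x y}

/-- Membership in `𝒟`: smooth and compactly supported. -/
def IsTest {N : ℕ} (f : Mink → Fin N → ℝ) : Prop :=
  ContDiff ℝ (⊤ : ℕ∞) f ∧ HasCompactSupport f

/-- The relative S-matrix `S_g(f) := S(g)⁻¹ · S(g + f)`. -/
def relS {N : ℕ} {G : Type*} [Group G] (S : (Mink → Fin N → ℝ) → G)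
    (g f : Mink → Fin N → ℝ) : G := (S g)⁻¹ * S (g + f)

theorem stmt0 {N : ℕ} (hN : 1 ≤ N) {G : Type*} [Group G]
    (S : (Mink → Fin N → ℝ) → G)
    (hS : ∀ f g h : Mink → Fin N → ℝ, IsTest f → IsTest g → IsTest h →
      tsupport f ∩ Jminus (tsupport h) = ∅ →
      S (f + g + h) = S (f + g) * (S g)⁻¹ * S (g + h))
    (f g h : Mink → Fin N → ℝ) (hf : IsTest f) (hg : IsTest g) (hh : IsTest h)
    (hsupp : tsupport f ∩ Jminus (tsupport h) = ∅) :
    relS S g (f + h) = relS S g f * relS S g h ∧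
    relS S (g + f) h = relS S g h ∧
    relS S (g + h) f = (relS S g h)⁻¹ * relS S g f * relS S g h ∧
    relS S (g + h) f = (relS S g h)⁻¹ * relS S g (f + h) := by
  have key : S (f + g + h) = S (f + g) * (S g)⁻¹ * S (g + h) :=
    hS f g h hf hg hh hsupp
  have e1 : g + (f + h) = f + g + h := by abel
  have e2 : g + f = f + g := by abel
  have e3 : g + f + h = f + g + h := by abel
  have e4 : g + h + f = f + g + h := by abel
  refine ⟨?_, ?_, ?_, ?_⟩ <;> simp only [relS, e1, e2, e3, e4, key] <;> group

end
end

section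
/- Let t ∈ ℝ with |t| < ε and let f ∈ 𝒟 satisfy supp(f) ⊆ Σ_ε and supp(f_t) ⊆ Σ_ε, where Σ_ε := {x ∈ M : |x⁰| < ε}. Then the free time translation is intertwined with conjugation by the co-cycle: S_{h·χ}(f_t) = U(t)·α_t(S_{h·χ}(f))·U(t)⁻¹; equivalently, α_t(S_{h·χ}(f)) = U(t)⁻¹·S_{h·χ}(f_t)·U(t). -/
/-!
STATEMENT 1: The free time translation is intertwined with the interacting one
by the co-cycle `U(t) = S_{h·χ}(h·τ_t⁻)`.
-/

noncomputable section

/-- Time translation `f_t(x⁰, x⃗) = f(x⁰ − t, x⃗)` of a function on `M`. -/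
def timeTrans {V : Type*} (t : ℝ) (f : Mink → V) : Mink → V :=
  fun x => f (x.1 - t, x.2)

/-- The indicator function `Θ⁻` of `(−∞, 0)`. -/
def ThetaMinus : ℝ → ℝ := Set.indicator (Set.Iio (0 : ℝ)) (fun _ => (1 : ℝ))

/-- `τ_t⁻ = Θ⁻ · (χ_t − χ)`, where `χ_t(x) = χ(x − t)`. -/
def tauMinus (χ : ℝ → ℝ) (t : ℝ) : ℝ → ℝ :=
  fun x => ThetaMinus x * (χ (x - t) - χ x)

/-- `h·ψ ∈ 𝒟`: the element whose `j`-th component is `(x⁰, x⃗) ↦ h(x⃗)ψ(x⁰)`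
and whose other components vanish. -/
def hProd (N : ℕ) (j : Fin N) (h : EuclideanSpace ℝ (Fin 3) → ℝ) (ψ : ℝ → ℝ) :
    Mink → Fin N → ℝ :=
  fun x => Pi.single j (h x.2 * ψ x.1)

/-- The co-cycle `U(t) := S_{h·χ}(h·τ_t⁻)`. -/
def cocycleU {N : ℕ} {G : Type*} [Group G] (S : (Mink → Fin N → ℝ) → G)
    (j : Fin N) (h : EuclideanSpace ℝ (Fin 3) → ℝ) (χ : ℝ → ℝ) (t : ℝ) : G :=
  relS S (hProd N j h χ) (hProd N j h (tauMinus χ t))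


-- Auxiliary lemmas ---------------------------------------------------------

lemma IsTest.add' {N : ℕ} {f g : Mink → Fin N → ℝ} (hf : IsTest f) (hg : IsTest g) :
    IsTest (f + g) := ⟨hf.1.add hg.1, hf.2.add hg.2⟩

lemma IsTest.sub' {N : ℕ} {f g : Mink → Fin N → ℝ} (hf : IsTest f) (hg : IsTest g) :
    IsTest (f - g) := by
  have : f - g = f + (-g) := by abel
  rw [this]
  exact hf.add' ⟨hg.1.neg, hg.2.neg⟩

lemma isTest_timeTrans {N : ℕ} (t : ℝ) {f : Mink → Fin N → ℝ} (hf : IsTest f) :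
    IsTest (timeTrans t f) := by
  constructor
  · exact hf.1.comp ((contDiff_fst.sub contDiff_const).prodMk contDiff_snd)
  · exact hf.2.comp_homeomorph ((Homeomorph.subRight t).prodCongr (Homeomorph.refl _))

lemma isTest_hProd {N : ℕ} (j : Fin N) {h : EuclideanSpace ℝ (Fin 3) → ℝ}
    (hh1 : ContDiff ℝ (⊤ : ℕ∞) h) (hh2 : HasCompactSupport h)
    {ψ : ℝ → ℝ} (hψ1 : ContDiff ℝ (⊤ : ℕ∞) ψ) (hψ2 : HasCompactSupport ψ) :
    IsTest (hProd N j h ψ) := by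
  constructor
  · rw [contDiff_pi]
    intro i
    by_cases hij : i = j
    · subst hij
      simpa [hProd] using (hh1.comp contDiff_snd).mul (hψ1.comp contDiff_fst)
    · simpa [hProd, Pi.single_apply, hij] using contDiff_const (c := (0:ℝ))
  · have hK : IsCompact ((tsupport ψ) ×ˢ (tsupport h)) := hψ2.prod hh2
    apply IsCompact.of_isClosed_subset hK (isClosed_tsupport _)
    apply closure_minimal _ ((isClosed_tsupport ψ).prod (isClosed_tsupport h))
    intro x hx
    simp only [Function.mem_support, hProd] at hx
    have hv : h x.2 * ψ x.1 ≠ 0 := by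
      intro hc
      exact hx (by rw [hc, Pi.single_zero])
    constructor
    · exact subset_closure (fun hc => hv (by rw [hc, mul_zero]))
    · exact subset_closure (fun hc => hv (by rw [hc, zero_mul]))

lemma Jminus_subset_lt {c : ℝ} {A : Set Mink} (hA : A ⊆ {x : Mink | x.1 < c}) :
    Jminus A ⊆ {x : Mink | x.1 < c} := by
  rintro x ⟨y, hy, hc⟩
  have h1 := hA hy
  have h2 := norm_nonneg (y.2 - x.2)
  simp only [Set.mem_setOf_eq] at *
  unfold causalPast at hc
  linarith

lemma Jminus_subset_le {c : ℝ} {A : Set Mink} (hA : A ⊆ {x : Mink | x.1 ≤ c}) :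
    Jminus A ⊆ {x : Mink | x.1 ≤ c} := by
  rintro x ⟨y, hy, hc⟩
  have h1 := hA hy
  have h2 := norm_nonneg (y.2 - x.2)
  simp only [Set.mem_setOf_eq] at *
  unfold causalPast at hc
  linarith

theorem stmt1 {N : ℕ} (hN : 1 ≤ N) {G : Type*} [Group G]
    (S : (Mink → Fin N → ℝ) → G)
    -- causal factorization property of `S`
    (hS : ∀ f g h : Mink → Fin N → ℝ, IsTest f → IsTest g → IsTest h →
      tsupport f ∩ Jminus (tsupport h) = ∅ →
      S (f + g + h) = S (f + g) * (S g)⁻¹ * S (g + h))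
    -- `α : ℝ → Aut(G)` is a group homomorphism …
    (α : ℝ → MulAut G)
    (hα : ∀ t s : ℝ, α (t + s) = α t * α s)
    -- … implementing the free time translation on S-matrices
    (hcov : ∀ (t : ℝ) (f : Mink → Fin N → ℝ), IsTest f → α t (S f) = S (timeTrans t f))
    -- the time cutoff `χ`
    (ε : ℝ) (hε : 0 < ε) (χ : ℝ → ℝ) (hχsmooth : ContDiff ℝ (⊤ : ℕ∞) χ)
    (hχone : ∀ x : ℝ, |x| ≤ ε → χ x = 1)
    (hχsupp : tsupport χ ⊆ Set.Ioo (-(2 * ε)) (2 * ε))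
    -- the spatial cutoff `h` and the component index `j`
    (h : EuclideanSpace ℝ (Fin 3) → ℝ) (hhsmooth : ContDiff ℝ (⊤ : ℕ∞) h)
    (hhsupp : HasCompactSupport h) (j : Fin N)
    -- the time `t` and the observable `f`
    (t : ℝ) (ht : |t| < ε) (f : Mink → Fin N → ℝ) (hf : IsTest f)
    (hfsupp : tsupport f ⊆ {x : Mink | |x.1| < ε})
    (hftsupp : tsupport (timeTrans t f) ⊆ {x : Mink | |x.1| < ε}) :
    relS S (hProd N j h χ) (timeTrans t f) =
      cocycleU S j h χ t * α t (relS S (hProd N j h χ) f) * (cocycleU S j h χ t)⁻¹ ∧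
    α t (relS S (hProd N j h χ) f) =
      (cocycleU S j h χ t)⁻¹ * relS S (hProd N j h χ) (timeTrans t f) * cocycleU S j h χ t := by
  have habs := abs_lt.mp ht
  set m : ℝ := min ε (ε + t) with hm_def
  set m' : ℝ := min ε (ε - t) with hm'_def
  have hm : 0 < m := lt_min hε (by linarith)
  have hm' : 0 < m' := lt_min hε (by linarith)
  have hθ1 : ∀ y : ℝ, y < 0 → ThetaMinus y = 1 := by
    intro y hy
    unfold ThetaMinus
    rw [Set.indicator_of_mem (Set.mem_Iio.mpr hy)]
  have hθ0 : ∀ y : ℝ, 0 ≤ y → ThetaMinus y = 0 := by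
    intro y hy
    unfold ThetaMinus
    rw [Set.indicator_of_notMem (Set.notMem_Iio.mpr hy)]
  -- `χ_t − χ` vanishes on a neighborhood of 0
  have hvanish : ∀ x : ℝ, -m' < x → x < m → χ (x - t) - χ x = 0 := by
    intro x h1 h2
    have hma : m ≤ ε := min_le_left _ _
    have hmb : m ≤ ε + t := min_le_right _ _
    have hm'a : m' ≤ ε := min_le_left _ _
    have hm'b : m' ≤ ε - t := min_le_right _ _
    have hx1 : χ x = 1 := hχone x (abs_le.mpr ⟨by linarith, by linarith⟩)
    have hx2 : χ (x - t) = 1 := hχone _ (abs_le.mpr ⟨by linarith, by linarith⟩)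
    rw [hx1, hx2, sub_self]
  have hχzero : ∀ y : ℝ, 2 * ε ≤ |y| → χ y = 0 := by
    intro y hy
    apply image_eq_zero_of_notMem_tsupport
    intro hmem
    have h2 := hχsupp hmem
    rw [Set.mem_Ioo] at h2
    have : |y| < 2 * ε := abs_lt.mpr ⟨by linarith [h2.1], h2.2⟩
    linarith
  have hχcs : HasCompactSupport χ :=
    IsCompact.of_isClosed_subset (isCompact_Icc (a := -(2 * ε)) (b := 2 * ε))
      (isClosed_tsupport χ) (hχsupp.trans Set.Ioo_subset_Icc_self)
  -- smoothness of `τ_t⁻`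
  have htau_smooth : ContDiff ℝ (⊤ : ℕ∞) (tauMinus χ t) := by
    rw [contDiff_iff_contDiffAt]
    intro x
    rcases lt_or_ge x m with hx | hx
    · have hsm : ContDiffAt ℝ (⊤ : ℕ∞) (fun y : ℝ => χ (y - t) - χ y) x :=
        ((hχsmooth.comp (contDiff_id.sub contDiff_const)).sub hχsmooth).contDiffAt
      apply hsm.congr_of_eventuallyEq
      filter_upwards [Iio_mem_nhds hx] with y hy
      by_cases hy0 : y < 0
      · simp [tauMinus, hθ1 y hy0]
      · push_neg at hy0
        have hd := hvanish y (by linarith) hy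
        simp [tauMinus, hθ0 y hy0, hd]
    · have hx' : -m' < x := by linarith
      apply (contDiffAt_const (c := (0 : ℝ))).congr_of_eventuallyEq
      filter_upwards [Ioi_mem_nhds hx'] with y hy
      by_cases hy0 : y < 0
      · have hd := hvanish y hy (lt_trans hy0 hm)
        simp [tauMinus, hd]
      · push_neg at hy0
        simp [tauMinus, hθ0 y hy0]
  -- compact support of `τ_t⁻`
  have htau_cs : HasCompactSupport (tauMinus χ t) := by
    apply IsCompact.of_isClosed_subset (isCompact_Icc (a := -(2 * ε + |t|)) (b := 2 * ε + |t|))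
      (isClosed_tsupport _)
    apply closure_minimal _ isClosed_Icc
    intro x hx
    simp only [Function.mem_support] at hx
    have hne : χ (x - t) - χ x ≠ 0 := by
      intro hc; exact hx (by simp [tauMinus, hc])
    rw [Set.mem_Icc]
    by_contra hcon
    push_neg at hcon
    have hgt : 2 * ε + |t| < |x| := by
      rcases le_or_gt (-(2 * ε + |t|)) x with h1 | h1
      · have h2 := hcon h1
        calc 2 * ε + |t| < x := h2
        _ ≤ |x| := le_abs_self x
      · have h2 : 2 * ε + |t| < -x := by linarith
        calc 2 * ε + |t| < -x := h2
        _ ≤ |x| := neg_le_abs x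
    have h1 : χ x = 0 := hχzero x (by linarith [abs_nonneg t])
    have h2 : χ (x - t) = 0 := hχzero _ (by
      have h3 := abs_sub_abs_le_abs_sub x t
      linarith)
    rw [h1, h2, sub_self] at hne
    exact hne rfl
  -- abbreviations
  simp only [cocycleU, relS]
  set g : Mink → Fin N → ℝ := hProd N j h χ with hg_def
  set a : Mink → Fin N → ℝ := hProd N j h (tauMinus χ t) with ha_def
  set ft : Mink → Fin N → ℝ := timeTrans t f with hft_def
  set b : Mink → Fin N → ℝ := timeTrans t g - g - a with hb_def
  have hgT : IsTest g := isTest_hProd j hhsmooth hhsupp hχsmooth hχcs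
  have haT : IsTest a := isTest_hProd j hhsmooth hhsupp htau_smooth htau_cs
  have hftT : IsTest ft := isTest_timeTrans t hf
  have hbT : IsTest b := by
    rw [hb_def]
    exact ((isTest_timeTrans t hgT).sub' hgT).sub' haT
  -- pointwise vanishing of `b` in the past region and of `a` in the future region
  have hbx : ∀ x : Mink, x.1 < m → b x = 0 := by
    intro x hx
    have key : h x.2 * χ (x.1 - t) - h x.2 * χ x.1 - h x.2 * tauMinus χ t x.1 = 0 := by
      unfold tauMinus
      by_cases hx0 : x.1 < 0
      · rw [hθ1 x.1 hx0]; ring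
      · push_neg at hx0
        rw [hθ0 x.1 hx0]
        have hd := hvanish x.1 (by linarith) hx
        have hd' : χ (x.1 - t) = χ x.1 := by linarith
        rw [hd']; ring
    have hbx' : b x = Pi.single j (h x.2 * χ (x.1 - t)) - Pi.single j (h x.2 * χ x.1)
        - Pi.single j (h x.2 * tauMinus χ t x.1) := by
      rw [hb_def]; rfl
    rw [hbx', ← Pi.single_sub, ← Pi.single_sub, key, Pi.single_zero]
  have hax : ∀ x : Mink, -m' < x.1 → a x = 0 := by
    intro x hx
    have hs : tauMinus χ t x.1 = 0 := by
      unfold tauMinus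
      by_cases hx0 : x.1 < 0
      · rw [hvanish x.1 hx (lt_trans hx0 hm), mul_zero]
      · push_neg at hx0
        rw [hθ0 x.1 hx0, zero_mul]
    have ha' : a x = Pi.single j (h x.2 * tauMinus χ t x.1) := by rw [ha_def]; rfl
    rw [ha', hs, mul_zero, Pi.single_zero]
  -- support bounds
  have hb_supp : tsupport b ⊆ {x : Mink | m ≤ x.1} := by
    apply closure_minimal _ (isClosed_le continuous_const continuous_fst)
    intro x hx
    simp only [Function.mem_support] at hx
    simp only [Set.mem_setOf_eq]
    by_contra hc
    exact hx (hbx x (lt_of_not_ge hc))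
  have ha_supp : tsupport a ⊆ {x : Mink | x.1 ≤ -m'} := by
    apply closure_minimal _ (isClosed_le continuous_fst continuous_const)
    intro x hx
    simp only [Function.mem_support] at hx
    simp only [Set.mem_setOf_eq]
    by_contra hc
    exact hx (hax x (lt_of_not_ge hc))
  have hft_shift : tsupport ft ⊆ {x : Mink | (x.1 - t, x.2) ∈ tsupport f} := by
    apply closure_minimal
    · intro x hx
      simp only [Function.mem_support] at hx
      exact subset_closure hx
    · exact (isClosed_tsupport f).preimage
        ((continuous_fst.sub continuous_const).prodMk continuous_snd)
  have hft_lt : tsupport ft ⊆ {x : Mink | x.1 < m} := by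
    intro x hx
    have h1' := hftsupp hx
    have h2' := hfsupp (hft_shift hx)
    simp only [Set.mem_setOf_eq] at h1' h2'
    have h1 := abs_lt.mp h1'
    have h2 := abs_lt.mp h2'
    simp only [Set.mem_setOf_eq]
    exact lt_min h1.2 (by linarith [h2.2])
  have hft_gt : tsupport ft ⊆ {x : Mink | -m' < x.1} := by
    intro x hx
    have h1' := hftsupp hx
    have h2' := hfsupp (hft_shift hx)
    simp only [Set.mem_setOf_eq] at h1' h2'
    have h1 := abs_lt.mp h1'
    have h2 := abs_lt.mp h2'
    simp only [Set.mem_setOf_eq]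
    have h3 : -x.1 < m' := lt_min (by linarith) (by linarith)
    linarith
  -- causal disjointness
  have hdisj1 : tsupport b ∩ Jminus (tsupport ft) = ∅ := by
    apply Set.eq_empty_iff_forall_notMem.mpr
    rintro x ⟨hx1, hx2⟩
    have h1 := hb_supp hx1
    have h2 := Jminus_subset_lt hft_lt hx2
    simp only [Set.mem_setOf_eq] at h1 h2
    linarith
  have hdisj2 : tsupport ft ∩ Jminus (tsupport a) = ∅ := by
    apply Set.eq_empty_iff_forall_notMem.mpr
    rintro x ⟨hx1, hx2⟩
    have h1 := hft_gt hx1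
    have h2 := Jminus_subset_le ha_supp hx2
    simp only [Set.mem_setOf_eq] at h1 h2
    linarith
  -- causal factorization
  have eq1 := hS b (g + a) ft hbT (hgT.add' haT) hftT hdisj1
  have e1 : b + (g + a) + ft = g + a + b + ft := by abel
  have e2 : b + (g + a) = g + a + b := by abel
  rw [e1, e2] at eq1
  have eq2 := hS ft g a hftT hgT haT hdisj2
  have e3 : ft + g + a = g + a + ft := by abel
  have e4 : ft + g = g + ft := by abel
  rw [e3, e4] at eq2
  -- covariance
  have htg : timeTrans t g = g + a + b := by rw [hb_def]; abel
  have htgf : timeTrans t (g + f) = g + a + b + ft := by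
    have hsplit : timeTrans t (g + f) = timeTrans t g + ft := by
      rw [hft_def]; rfl
    rw [hsplit, htg]
  have hc1 : α t (S g) = S (g + a + b) := by rw [hcov t g hgT, htg]
  have hc2 : α t (S (g + f)) = S (g + a + b + ft) := by rw [hcov t (g + f) (hgT.add' hf), htgf]
  have hαrel : α t ((S g)⁻¹ * S (g + f)) = (S (g + a + b))⁻¹ * S (g + a + b + ft) := by
    rw [map_mul, map_inv, hc1, hc2]
  constructor
  · rw [hαrel, eq1, eq2]; group
  · rw [hαrel, eq1, eq2]; group


end
end

section
/- For all t, s ∈ ℝ with |t| + |s| < ε, the co-cycle satisfies the co-cycle condition U(t + s) = U(t)·α_t(U(s)). -/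
/-!
STATEMENT 2: the co-cycle condition `U(t + s) = U(t)·α_t(U(s))` for `|t| + |s| < ε`.
-/

noncomputable section

lemma thetaMinus_of_neg {x : ℝ} (hx : x < 0) : ThetaMinus x = 1 := by
  simp [ThetaMinus, Set.indicator_apply, Set.mem_Iio, hx]

lemma thetaMinus_of_nonneg {x : ℝ} (hx : 0 ≤ x) : ThetaMinus x = 0 :=
  Set.indicator_of_notMem (by simpa using hx) _

lemma tauMinus_of_nonneg (χ : ℝ → ℝ) (t : ℝ) {x : ℝ} (hx : 0 ≤ x) :
    tauMinus χ t x = 0 := by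
  simp [tauMinus, thetaMinus_of_nonneg hx]

lemma tauMinus_of_neg (χ : ℝ → ℝ) (t : ℝ) {x : ℝ} (hx : x < 0) :
    tauMinus χ t x = χ (x - t) - χ x := by
  simp [tauMinus, thetaMinus_of_neg hx]

lemma tauMinus_smooth {ε : ℝ} {χ : ℝ → ℝ} (hχ : ContDiff ℝ (⊤ : ℕ∞) χ)
    (hχone : ∀ x : ℝ, |x| ≤ ε → χ x = 1) {t : ℝ} (ht : |t| < ε) :
    ContDiff ℝ (⊤ : ℕ∞) (tauMinus χ t) := by
  rw [contDiff_iff_contDiffAt]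
  intro x
  rcases lt_trichotomy x 0 with hx | hx | hx
  · have heq : tauMinus χ t =ᶠ[nhds x] fun y => χ (y - t) - χ y := by
      filter_upwards [Iio_mem_nhds hx] with y hy
      exact tauMinus_of_neg χ t hy
    exact (((hχ.comp (contDiff_id.sub contDiff_const)).sub hχ).contDiffAt).congr_of_eventuallyEq heq
  · subst hx
    have hmem : Set.Ioo (-(ε - |t|)) (ε - |t|) ∈ nhds (0 : ℝ) :=
      Ioo_mem_nhds (by linarith) (by linarith)
    have heq : tauMinus χ t =ᶠ[nhds (0 : ℝ)] fun _ => 0 := by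
      filter_upwards [hmem] with y hy
      rcases lt_or_ge y 0 with h0 | h0
      · rw [tauMinus_of_neg χ t h0]
        have hyt := le_abs_self t
        have hyt' := neg_abs_le t
        obtain ⟨hy1, hy2⟩ := hy
        have h1 : χ y = 1 := hχone y (abs_le.mpr ⟨by linarith, by linarith⟩)
        have h2 : χ (y - t) = 1 := hχone _ (abs_le.mpr ⟨by linarith, by linarith⟩)
        rw [h1, h2]; ring
      · exact tauMinus_of_nonneg χ t h0
    exact contDiffAt_const.congr_of_eventuallyEq heq
  · have heq : tauMinus χ t =ᶠ[nhds x] fun _ => 0 := by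
      filter_upwards [Ioi_mem_nhds hx] with y hy
      exact tauMinus_of_nonneg χ t (le_of_lt hy)
    exact contDiffAt_const.congr_of_eventuallyEq heq

lemma chi_zero {ε : ℝ} {χ : ℝ → ℝ} (hχsupp : tsupport χ ⊆ Set.Ioo (-(2 * ε)) (2 * ε))
    {y : ℝ} (hy : 2 * ε ≤ |y|) : χ y = 0 := by
  apply image_eq_zero_of_notMem_tsupport
  intro hmem
  have h2 := hχsupp hmem
  rw [Set.mem_Ioo] at h2
  exact absurd (abs_lt.mpr ⟨h2.1, h2.2⟩) (not_lt.mpr hy)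

lemma tau_zero {ε : ℝ} {χ : ℝ → ℝ} (hχsupp : tsupport χ ⊆ Set.Ioo (-(2 * ε)) (2 * ε))
    {t y : ℝ} (hy : 2 * ε + |t| ≤ |y|) : tauMinus χ t y = 0 := by
  have hat := le_abs_self t
  have hat' := neg_abs_le t
  have h1 : χ y = 0 := chi_zero hχsupp (by linarith [abs_nonneg t])
  have h2 : χ (y - t) = 0 := chi_zero hχsupp (by
    rcases abs_cases y with ⟨h, _⟩ | ⟨h, _⟩ <;> rcases abs_cases (y - t) with ⟨h', _⟩ | ⟨h', _⟩ <;> linarith)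
  simp [tauMinus, h1, h2]

lemma tau_cocycle {ε : ℝ} {χ : ℝ → ℝ} (hχone : ∀ x : ℝ, |x| ≤ ε → χ x = 1)
    {t s : ℝ} (hts : |t| + |s| < ε) (x : ℝ) :
    tauMinus χ (t + s) x = tauMinus χ t x + tauMinus χ s (x - t) := by
  have hat := le_abs_self t
  have hat' := neg_abs_le t
  have has := le_abs_self s
  have has' := neg_abs_le s
  have h0t := abs_nonneg t
  have h0s := abs_nonneg s
  rcases lt_or_ge x 0 with hx | hx
  · rw [tauMinus_of_neg χ _ hx, tauMinus_of_neg χ t hx]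
    rcases lt_or_ge (x - t) 0 with hxt | hxt
    · rw [tauMinus_of_neg χ s hxt]; ring_nf
    · rw [tauMinus_of_nonneg χ s hxt]
      have h1 : χ (x - t) = 1 := hχone _ (abs_le.mpr ⟨by linarith, by linarith⟩)
      have h2 : χ (x - (t + s)) = 1 := hχone _ (abs_le.mpr ⟨by linarith, by linarith⟩)
      rw [h1, h2]; ring
  · rw [tauMinus_of_nonneg χ _ hx, tauMinus_of_nonneg χ t hx]
    rcases lt_or_ge (x - t) 0 with hxt | hxt
    · rw [tauMinus_of_neg χ s hxt]
      have h1 : χ (x - t) = 1 := hχone _ (abs_le.mpr ⟨by linarith, by linarith⟩)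
      have h2 : χ (x - t - s) = 1 := hχone _ (abs_le.mpr ⟨by linarith, by linarith⟩)
      rw [h1, h2]; ring
    · rw [tauMinus_of_nonneg χ s hxt]; ring

lemma hProd_single_ne {N : ℕ} {j : Fin N} {h : EuclideanSpace ℝ (Fin 3) → ℝ}
    {ψ : ℝ → ℝ} {x : Mink} (hx : hProd N j h ψ x ≠ 0) : ψ x.1 ≠ 0 := by
  intro h0
  apply hx
  simp [hProd, h0]

lemma hProd_add {N : ℕ} (j : Fin N) (h : EuclideanSpace ℝ (Fin 3) → ℝ)
    (ψ₁ ψ₂ : ℝ → ℝ) :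
    hProd N j h ψ₁ + hProd N j h ψ₂ = hProd N j h (fun x => ψ₁ x + ψ₂ x) := by
  funext x i
  simp only [Pi.add_apply, hProd, Pi.single_apply]
  split_ifs <;> ring

lemma isTest_hProd_s2 {N : ℕ} (j : Fin N) {h : EuclideanSpace ℝ (Fin 3) → ℝ}
    (hh : ContDiff ℝ (⊤ : ℕ∞) h) (hhc : HasCompactSupport h)
    {ψ : ℝ → ℝ} (hψ : ContDiff ℝ (⊤ : ℕ∞) ψ) {a b : ℝ}
    (hsupp : Function.support ψ ⊆ Set.Icc a b) :
    IsTest (hProd N j h ψ) := by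
  constructor
  · rw [contDiff_pi]
    intro i
    by_cases hij : i = j
    · subst hij
      have he : (fun x : Mink => hProd N i h ψ x i) = fun x : Mink => h x.2 * ψ x.1 := by
        funext x; simp [hProd]
      rw [he]
      exact (hh.comp contDiff_snd).mul (hψ.comp contDiff_fst)
    · have he : (fun x : Mink => hProd N j h ψ x i) = fun _ => 0 := by
        funext x; simp [hProd, Pi.single_apply, hij]
      rw [he]; exact contDiff_const
  · apply HasCompactSupport.intro (isCompact_Icc.prod hhc)
    intro x hx
    simp only [Set.mem_prod, not_and_or] at hx
    rcases hx with hx | hx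
    · have h0 : ψ x.1 = 0 := by
        by_contra hne
        exact hx (hsupp hne)
      simp [hProd, h0]
    · have h0 : h x.2 = 0 := image_eq_zero_of_notMem_tsupport hx
      simp [hProd, h0]

theorem stmt2 {N : ℕ} (hN : 1 ≤ N) {G : Type*} [Group G]
    (S : (Mink → Fin N → ℝ) → G)
    -- causal factorization property of `S`
    (hS : ∀ f g h : Mink → Fin N → ℝ, IsTest f → IsTest g → IsTest h →
      tsupport f ∩ Jminus (tsupport h) = ∅ →
      S (f + g + h) = S (f + g) * (S g)⁻¹ * S (g + h))
    -- `α : ℝ → Aut(G)` is a group homomorphism …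
    (α : ℝ → MulAut G)
    (hα : ∀ t s : ℝ, α (t + s) = α t * α s)
    -- … implementing the free time translation on S-matrices
    (hcov : ∀ (t : ℝ) (f : Mink → Fin N → ℝ), IsTest f → α t (S f) = S (timeTrans t f))
    -- the time cutoff `χ`
    (ε : ℝ) (hε : 0 < ε) (χ : ℝ → ℝ) (hχsmooth : ContDiff ℝ (⊤ : ℕ∞) χ)
    (hχone : ∀ x : ℝ, |x| ≤ ε → χ x = 1)
    (hχsupp : tsupport χ ⊆ Set.Ioo (-(2 * ε)) (2 * ε))
    -- the spatial cutoff `h` and the component index `j`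
    (h : EuclideanSpace ℝ (Fin 3) → ℝ) (hhsmooth : ContDiff ℝ (⊤ : ℕ∞) h)
    (hhsupp : HasCompactSupport h) (j : Fin N) :
    ∀ t s : ℝ, |t| + |s| < ε →
      cocycleU S j h χ (t + s) = cocycleU S j h χ t * α t (cocycleU S j h χ s) := by
  intro t s hts
  have h0t := abs_nonneg t
  have h0s := abs_nonneg s
  have hat := le_abs_self t
  have hat' := neg_abs_le t
  have has := le_abs_self s
  have has' := neg_abs_le s
  have ht : |t| < ε := by linarith
  have hs : |s| < ε := by linarith
  have hbig : ∀ c x : ℝ, x ∉ Set.Icc (-c) c → c < |x| := by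
    intro c x hx
    rw [Set.mem_Icc, not_and_or, not_le, not_le] at hx
    rcases hx with hx | hx <;> rcases abs_cases x with ⟨he, _⟩ | ⟨he, _⟩ <;> linarith
  -- the three test functions
  set ψf : ℝ → ℝ := fun x => χ x + tauMinus χ t x - χ (x - t) with hψf_def
  set ψg : ℝ → ℝ := fun x => χ (x - t) with hψg_def
  set ψh : ℝ → ℝ := fun x => tauMinus χ s (x - t) with hψh_def
  -- IsTest facts
  have hF : IsTest (hProd N j h ψf) := by
    apply isTest_hProd_s2 j hhsmooth hhsupp
    · exact (hχsmooth.add (tauMinus_smooth hχsmooth hχone ht)).sub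
        (hχsmooth.comp (contDiff_id.sub contDiff_const))
    · rw [Function.support_subset_iff']
      intro x hx
      have hR := hbig (2 * ε + |t|) x hx
      have h1 : χ x = 0 := chi_zero hχsupp (by linarith)
      have h2 : tauMinus χ t x = 0 := tau_zero hχsupp (le_of_lt hR)
      have h3 : χ (x - t) = 0 := chi_zero hχsupp (by
        have := abs_sub_abs_le_abs_sub x t; linarith)
      simp only [hψf_def, h1, h2, h3]; ring
  have hG : IsTest (hProd N j h ψg) := by
    apply isTest_hProd_s2 j hhsmooth hhsupp
    · exact hχsmooth.comp (contDiff_id.sub contDiff_const)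
    · rw [Function.support_subset_iff']
      intro x hx
      have hR := hbig (2 * ε + |t|) x hx
      exact chi_zero hχsupp (by have := abs_sub_abs_le_abs_sub x t; linarith)
  have hH : IsTest (hProd N j h ψh) := by
    apply isTest_hProd_s2 j hhsmooth hhsupp
    · exact (tauMinus_smooth hχsmooth hχone hs).comp (contDiff_id.sub contDiff_const)
    · rw [Function.support_subset_iff']
      intro x hx
      have hR := hbig (2 * ε + |s| + |t|) x hx
      exact tau_zero hχsupp (by have := abs_sub_abs_le_abs_sub x t; linarith)
  have hA : IsTest (hProd N j h χ) := by
    apply isTest_hProd_s2 j hhsmooth hhsupp hχsmooth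
    intro x hx
    have := hχsupp (subset_tsupport χ hx)
    rw [Set.mem_Ioo] at this
    exact ⟨le_of_lt this.1, le_of_lt this.2⟩
  have hA2 : IsTest (hProd N j h χ + hProd N j h (tauMinus χ s)) := by
    rw [hProd_add]
    apply isTest_hProd_s2 j hhsmooth hhsupp
    · exact hχsmooth.add (tauMinus_smooth hχsmooth hχone hs)
    · rw [Function.support_subset_iff']
      intro x hx
      have hR := hbig (2 * ε + |s|) x hx
      have h1 : χ x = 0 := chi_zero hχsupp (by linarith)
      have h2 : tauMinus χ s x = 0 := tau_zero hχsupp (le_of_lt hR)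
      simp [h1, h2]
  -- support localization
  have hFsupp : tsupport (hProd N j h ψf) ⊆ {x : Mink | ε - |t| ≤ x.1} := by
    apply closure_minimal _ (isClosed_le continuous_const continuous_fst)
    intro x hx
    rw [Function.mem_support] at hx
    have hne := hProd_single_ne hx
    by_contra hlt
    rw [Set.mem_setOf_eq, not_le] at hlt
    apply hne
    show χ x.1 + tauMinus χ t x.1 - χ (x.1 - t) = 0
    rcases lt_or_ge x.1 0 with h0 | h0
    · rw [tauMinus_of_neg χ t h0]; ring
    · rw [tauMinus_of_nonneg χ t h0]
      have h1 : χ x.1 = 1 := hχone _ (abs_le.mpr ⟨by linarith, by linarith⟩)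
      have h2 : χ (x.1 - t) = 1 := hχone _ (abs_le.mpr ⟨by linarith, by linarith⟩)
      rw [h1, h2]; ring
  have hHsupp : tsupport (hProd N j h ψh) ⊆ {x : Mink | x.1 ≤ t - ε + |s|} := by
    apply closure_minimal _ (isClosed_le continuous_fst continuous_const)
    intro x hx
    rw [Function.mem_support] at hx
    have hne := hProd_single_ne hx
    by_contra hlt
    rw [Set.mem_setOf_eq, not_le] at hlt
    apply hne
    show tauMinus χ s (x.1 - t) = 0
    rcases le_or_gt t x.1 with h0 | h0
    · exact tauMinus_of_nonneg χ s (by linarith)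
    · rw [tauMinus_of_neg χ s (by linarith)]
      have h1 : χ (x.1 - t) = 1 := hχone _ (abs_le.mpr ⟨by linarith, by linarith⟩)
      have h2 : χ (x.1 - t - s) = 1 := hχone _ (abs_le.mpr ⟨by linarith, by linarith⟩)
      rw [h1, h2]; ring
  have hdisj : tsupport (hProd N j h ψf) ∩ Jminus (tsupport (hProd N j h ψh)) = ∅ := by
    rw [Set.eq_empty_iff_forall_notMem]
    rintro x ⟨hxF, y, hyH, hxy⟩
    have h1 := hFsupp hxF
    have h2 := hHsupp hyH
    rw [Set.mem_setOf_eq] at h1 h2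
    have h3 : x.1 ≤ y.1 := by
      have hn : (0:ℝ) ≤ ‖y.2 - x.2‖ := norm_nonneg _
      have hc : ‖y.2 - x.2‖ ≤ y.1 - x.1 := hxy
      linarith
    linarith
  -- function identities
  have eFG : hProd N j h ψf + hProd N j h ψg
      = hProd N j h χ + hProd N j h (tauMinus χ t) := by
    rw [hProd_add, hProd_add]
    exact congrArg (hProd N j h) (funext fun y => by
      simp only [hψf_def, hψg_def]; ring)
  have eFGH : hProd N j h ψf + hProd N j h ψg + hProd N j h ψh
      = hProd N j h χ + hProd N j h (tauMinus χ (t + s)) := by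
    rw [hProd_add, hProd_add, hProd_add]
    refine congrArg (hProd N j h) (funext fun y => ?_)
    have := tau_cocycle hχone hts y
    simp only [hψf_def, hψg_def, hψh_def]
    linarith
  have eGH : hProd N j h ψg + hProd N j h ψh
      = timeTrans t (hProd N j h χ + hProd N j h (tauMinus χ s)) := by
    rw [hProd_add, hProd_add]
    rfl
  have eG : hProd N j h ψg = timeTrans t (hProd N j h χ) := rfl
  have key := hS _ _ _ hF hG hH hdisj
  unfold cocycleU relS
  rw [← eFGH, key, eFG, eGH, eG, ← hcov t _ hA, ← hcov t _ hA2, map_mul, map_inv]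
  group

end
end

section
/- Let χ, χ' : ℝ → ℝ both be smooth, equal to 1 on [−ε, ε] and supported in (−2ε, 2ε), with associated co-cycles U^χ(t) = S_{h·χ}(h·τ_t⁻) and U^{χ'}(t) = S_{h·χ'}(h·τ'_t⁻), where τ_t⁻ = Θ⁻·(χ_t − χ) and τ'_t⁻ = Θ⁻·(χ'_t − χ'). Set σ⁻ := Θ⁻·(χ' − χ) and V := S_{h·χ}(h·σ⁻). Then for all t with |t| < ε the two co-cycles are equivalent: U^{χ'}(t) = V⁻¹·U^{χ}(t)·α_t(V). -/
/-!
STATEMENT 3: co-cycles for different time cutoffs `χ, χ'` are equivalent: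
`U^{χ'}(t) = V⁻¹ · U^χ(t) · α_t(V)` with `V = S_{h·χ}(h·σ⁻)`, `σ⁻ = Θ⁻·(χ' − χ)`.
-/

noncomputable section

/-- `σ⁻ = Θ⁻ · (χ' − χ)`. -/
def sigmaMinus (χ χ' : ℝ → ℝ) : ℝ → ℝ :=
  fun x => ThetaMinus x * (χ' x - χ x)

/- ## auxiliary lemmas -/

lemma thetaMinus_eq (x : ℝ) : ThetaMinus x = if x < 0 then 1 else 0 := by
  simp [ThetaMinus, Set.indicator_apply]

lemma thetaMul_contDiff {g : ℝ → ℝ} (hg : ContDiff ℝ (⊤ : ℕ∞) g) {δ : ℝ} (hδ : 0 < δ)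
    (h0 : ∀ x, |x| < δ → g x = 0) :
    ContDiff ℝ (⊤ : ℕ∞) (fun x => ThetaMinus x * g x) := by
  rw [contDiff_iff_contDiffAt]
  intro x
  rcases lt_or_ge x 0 with hx | hx
  · have he : (fun y => ThetaMinus y * g y) =ᶠ[nhds x] g := by
      filter_upwards [Iio_mem_nhds hx] with y hy
      have hy' : y < 0 := hy
      rw [thetaMinus_eq, if_pos hy', one_mul]
    exact hg.contDiffAt.congr_of_eventuallyEq he
  · have he : (fun y => ThetaMinus y * g y) =ᶠ[nhds x] (fun _ => (0 : ℝ)) := by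
      filter_upwards [Ioi_mem_nhds (show -δ < x by linarith)] with y hy
      have hy' : -δ < y := hy
      rcases lt_or_ge y 0 with h1 | h1
      · rw [h0 y (by rw [abs_of_neg h1]; linarith), mul_zero]
      · rw [thetaMinus_eq, if_neg (not_lt.mpr h1), zero_mul]
    exact contDiffAt_const.congr_of_eventuallyEq he

lemma hProd_isTest {N : ℕ} (j : Fin N) {h : EuclideanSpace ℝ (Fin 3) → ℝ}
    (hhs : ContDiff ℝ (⊤ : ℕ∞) h) (hhc : HasCompactSupport h)
    {ψ : ℝ → ℝ} (hψ : ContDiff ℝ (⊤ : ℕ∞) ψ) {C : ℝ}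
    (hz : ∀ x, C ≤ |x| → ψ x = 0) : IsTest (hProd N j h ψ) := by
  constructor
  · rw [contDiff_pi]
    intro i
    by_cases hij : i = j
    · subst hij
      simp only [hProd, Pi.single_eq_same]
      exact (hhs.comp contDiff_snd).mul (hψ.comp contDiff_fst)
    · have : (fun x : Mink => hProd N j h ψ x i) = fun _ => (0 : ℝ) := by
        funext x; exact Pi.single_eq_of_ne hij _
      rw [this]; exact contDiff_const
  · apply HasCompactSupport.intro (K := (Set.Icc (-C) C) ×ˢ tsupport h)
      (isCompact_Icc.prod hhc)
    intro x hx
    have hzero : h x.2 * ψ x.1 = 0 := by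
      rw [Set.mem_prod, not_and_or] at hx
      rcases hx with hx | hx
      · have hC : C ≤ |x.1| := by
          rw [Set.mem_Icc, not_and_or] at hx
          rcases hx with hx | hx <;> push_neg at hx
          · calc C ≤ -x.1 := by linarith
              _ ≤ |x.1| := neg_le_abs _
          · exact le_trans (le_of_lt hx) (le_abs_self _)
        rw [hz x.1 hC, mul_zero]
      · rw [image_eq_zero_of_notMem_tsupport hx, zero_mul]
    simp only [hProd]
    rw [hzero, Pi.single_zero]

lemma hProd_add_eq {N : ℕ} (j : Fin N) (h : EuclideanSpace ℝ (Fin 3) → ℝ)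
    {ψ₁ ψ₂ ψ₃ : ℝ → ℝ} (hsum : ∀ x, ψ₁ x + ψ₂ x = ψ₃ x) :
    hProd N j h ψ₁ + hProd N j h ψ₂ = hProd N j h ψ₃ := by
  funext x
  simp only [hProd, Pi.add_apply, ← Pi.single_add, ← mul_add, hsum]

lemma hProd_sep {N : ℕ} (j : Fin N) (h : EuclideanSpace ℝ (Fin 3) → ℝ)
    {ψf ψh : ℝ → ℝ} {a b : ℝ} (hab : b < a)
    (hf : ∀ x, x < a → ψf x = 0) (hh2 : ∀ x, b < x → ψh x = 0) :
    tsupport (hProd N j h ψf) ∩ Jminus (tsupport (hProd N j h ψh)) = ∅ := by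
  have Hf : tsupport (hProd N j h ψf) ⊆ {x : Mink | a ≤ x.1} := by
    apply closure_minimal _ (isClosed_le continuous_const continuous_fst)
    intro x hx
    by_contra hlt
    apply Function.mem_support.mp hx
    simp only [hProd]
    rw [hf x.1 (by simpa using hlt), mul_zero, Pi.single_zero]
  have Hh : tsupport (hProd N j h ψh) ⊆ {x : Mink | x.1 ≤ b} := by
    apply closure_minimal _ (isClosed_le continuous_fst continuous_const)
    intro x hx
    by_contra hlt
    apply Function.mem_support.mp hx
    simp only [hProd]
    rw [hh2 x.1 (by simpa using hlt), mul_zero, Pi.single_zero]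
  rw [Set.eq_empty_iff_forall_notMem]
  rintro x ⟨hx1, y, hy, hxy⟩
  have h1 : a ≤ x.1 := Hf hx1
  have h2 : y.1 ≤ b := Hh hy
  have h3 : (0 : ℝ) ≤ y.1 - x.1 := le_trans (norm_nonneg _) hxy
  linarith

lemma grp_aux {G : Type*} [Group G] (A A' Nv R M Ct Mt : G)
    (hk : Nv * Ct⁻¹ * Mt = M * A'⁻¹ * R) :
    A'⁻¹ * R = (A⁻¹ * M)⁻¹ * (A⁻¹ * Nv) * (Ct⁻¹ * Mt) := by
  have h1 : (A⁻¹ * M)⁻¹ * (A⁻¹ * Nv) * (Ct⁻¹ * Mt) = M⁻¹ * (Nv * Ct⁻¹ * Mt) := by group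
  rw [h1, hk]; group

theorem stmt3 {N : ℕ} (hN : 1 ≤ N) {G : Type*} [Group G]
    (S : (Mink → Fin N → ℝ) → G)
    -- causal factorization property of `S`
    (hS : ∀ f g h : Mink → Fin N → ℝ, IsTest f → IsTest g → IsTest h →
      tsupport f ∩ Jminus (tsupport h) = ∅ →
      S (f + g + h) = S (f + g) * (S g)⁻¹ * S (g + h))
    -- `α : ℝ → Aut(G)` is a group homomorphism …
    (α : ℝ → MulAut G)
    (hα : ∀ t s : ℝ, α (t + s) = α t * α s)
    -- … implementing the free time translation on S-matrices
    (hcov : ∀ (t : ℝ) (f : Mink → Fin N → ℝ), IsTest f → α t (S f) = S (timeTrans t f))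
    -- the two time cutoffs `χ, χ'`
    (ε : ℝ) (hε : 0 < ε) (χ χ' : ℝ → ℝ)
    (hχsmooth : ContDiff ℝ (⊤ : ℕ∞) χ) (hχ'smooth : ContDiff ℝ (⊤ : ℕ∞) χ')
    (hχone : ∀ x : ℝ, |x| ≤ ε → χ x = 1) (hχ'one : ∀ x : ℝ, |x| ≤ ε → χ' x = 1)
    (hχsupp : tsupport χ ⊆ Set.Ioo (-(2 * ε)) (2 * ε))
    (hχ'supp : tsupport χ' ⊆ Set.Ioo (-(2 * ε)) (2 * ε))
    -- the spatial cutoff `h` and the component index `j`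
    (h : EuclideanSpace ℝ (Fin 3) → ℝ) (hhsmooth : ContDiff ℝ (⊤ : ℕ∞) h)
    (hhsupp : HasCompactSupport h) (j : Fin N) :
    ∀ t : ℝ, |t| < ε →
      cocycleU S j h χ' t =
        (relS S (hProd N j h χ) (hProd N j h (sigmaMinus χ χ')))⁻¹ *
          cocycleU S j h χ t *
          α t (relS S (hProd N j h χ) (hProd N j h (sigmaMinus χ χ'))) := by
  intro t ht
  have htle : |t| ≤ ε := le_of_lt ht
  have httle : t ≤ |t| := le_abs_self t
  have hmt : -t ≤ |t| := neg_le_abs t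
  have habs : (0 : ℝ) ≤ |t| := abs_nonneg t
  -- vanishing of χ, χ' outside (-2ε, 2ε)
  have hχ0 : ∀ x : ℝ, 2 * ε ≤ |x| → χ x = 0 := by
    intro x hx
    apply image_eq_zero_of_notMem_tsupport
    intro hmem
    obtain ⟨h1, h2⟩ := hχsupp hmem
    have : |x| < 2 * ε := abs_lt.mpr ⟨by linarith, h2⟩
    linarith
  have hχ'0 : ∀ x : ℝ, 2 * ε ≤ |x| → χ' x = 0 := by
    intro x hx
    apply image_eq_zero_of_notMem_tsupport
    intro hmem
    obtain ⟨h1, h2⟩ := hχ'supp hmem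
    have : |x| < 2 * ε := abs_lt.mpr ⟨by linarith, h2⟩
    linarith
  have hz4 : ∀ x : ℝ, 4 * ε ≤ |x| → χ x = 0 ∧ χ' x = 0 ∧ χ (x - t) = 0 ∧ χ' (x - t) = 0 := by
    intro x hx
    have h1 : 2 * ε ≤ |x| := by linarith
    have h2 : 2 * ε ≤ |x - t| := by
      have := abs_sub_abs_le_abs_sub x t
      linarith
    exact ⟨hχ0 x h1, hχ'0 x h1, hχ0 _ h2, hχ'0 _ h2⟩
  -- smoothness of the pieces
  have sχt : ContDiff ℝ (⊤ : ℕ∞) (fun x : ℝ => χ (x - t)) :=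
    hχsmooth.comp (contDiff_id.sub contDiff_const)
  have sτ : ContDiff ℝ (⊤ : ℕ∞) (tauMinus χ t) := by
    apply thetaMul_contDiff (sχt.sub hχsmooth) (show (0 : ℝ) < ε - |t| by linarith)
    intro x hx
    have e1 : χ x = 1 := hχone x (by linarith)
    have e2 : χ (x - t) = 1 := hχone _ (by have := abs_sub x t; linarith)
    rw [e1, e2, sub_self]
  have sχ't : ContDiff ℝ (⊤ : ℕ∞) (fun x : ℝ => χ' (x - t)) :=
    hχ'smooth.comp (contDiff_id.sub contDiff_const)
  have sτ' : ContDiff ℝ (⊤ : ℕ∞) (tauMinus χ' t) := by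
    apply thetaMul_contDiff (sχ't.sub hχ'smooth)
      (show (0 : ℝ) < ε - |t| by linarith)
    intro x hx
    have e1 : χ' x = 1 := hχ'one x (by linarith)
    have e2 : χ' (x - t) = 1 := hχ'one _ (by have := abs_sub x t; linarith)
    rw [e1, e2, sub_self]
  have sσ : ContDiff ℝ (⊤ : ℕ∞) (sigmaMinus χ χ') := by
    apply thetaMul_contDiff (hχ'smooth.sub hχsmooth) hε
    intro x hx
    rw [hχone x (le_of_lt hx), hχ'one x (le_of_lt hx), sub_self]
  have sσt : ContDiff ℝ (⊤ : ℕ∞) (fun x : ℝ => sigmaMinus χ χ' (x - t)) :=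
    sσ.comp (contDiff_id.sub contDiff_const)
  -- test-function properties
  have T1 : IsTest (hProd N j h χ) :=
    hProd_isTest j hhsmooth hhsupp hχsmooth (fun x hx => (hz4 x hx).1)
  have T2 : IsTest (hProd N j h χ') :=
    hProd_isTest j hhsmooth hhsupp hχ'smooth (fun x hx => (hz4 x hx).2.1)
  have T3 : IsTest (hProd N j h (fun x => χ (x - t))) :=
    hProd_isTest j hhsmooth hhsupp sχt (fun x hx => (hz4 x hx).2.2.1)
  have T5 : IsTest (hProd N j h (tauMinus χ' t)) := by
    apply hProd_isTest j hhsmooth hhsupp sτ'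
    intro x hx
    obtain ⟨z1, z2, z3, z4⟩ := hz4 x hx
    simp [tauMinus, z2, z4]
  have T7 : IsTest (hProd N j h (fun x => sigmaMinus χ χ' (x - t))) := by
    apply hProd_isTest j hhsmooth hhsupp sσt
    intro x hx
    obtain ⟨z1, z2, z3, z4⟩ := hz4 x hx
    simp [sigmaMinus, z3, z4]
  have T8 : IsTest (hProd N j h (fun x => χ x + tauMinus χ t x - χ (x - t))) := by
    apply hProd_isTest j hhsmooth hhsupp ((hχsmooth.add sτ).sub sχt)
    intro x hx
    obtain ⟨z1, z2, z3, z4⟩ := hz4 x hx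
    simp [tauMinus, z1, z3]
  have T9 : IsTest (hProd N j h (fun x => χ x + sigmaMinus χ χ' x - χ' x)) := by
    apply hProd_isTest j hhsmooth hhsupp ((hχsmooth.add sσ).sub hχ'smooth)
    intro x hx
    obtain ⟨z1, z2, z3, z4⟩ := hz4 x hx
    simp [sigmaMinus, z1, z2]
  have Tμ : IsTest (hProd N j h (fun x => χ x + sigmaMinus χ χ' x)) := by
    apply hProd_isTest j hhsmooth hhsupp (hχsmooth.add sσ)
    intro x hx
    obtain ⟨z1, z2, z3, z4⟩ := hz4 x hx
    simp [sigmaMinus, z1, z2]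
  -- support separation for the two factorizations
  have sep1 : tsupport (hProd N j h (fun x => χ x + tauMinus χ t x - χ (x - t))) ∩
      Jminus (tsupport (hProd N j h (fun x => sigmaMinus χ χ' (x - t)))) = ∅ := by
    apply hProd_sep j h (show t - ε < ε - |t| by linarith)
    · intro x hx
      rcases lt_or_ge x 0 with h1 | h1
      · simp only [tauMinus, thetaMinus_eq, if_pos h1]; ring
      · have e1 : χ x = 1 := hχone x (by rw [abs_of_nonneg h1]; linarith)
        have e2 : χ (x - t) = 1 := by
          apply hχone
          have h2 : |x - t| ≤ |x| + |t| := abs_sub x t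
          rw [abs_of_nonneg h1] at h2; linarith
        simp only [tauMinus, thetaMinus_eq, if_neg (not_lt.mpr h1), e1, e2]; ring
    · intro x hx
      rcases lt_or_ge (x - t) 0 with h1 | h1
      · have e1 : χ (x - t) = 1 := hχone _ (by rw [abs_of_neg h1]; linarith)
        have e2 : χ' (x - t) = 1 := hχ'one _ (by rw [abs_of_neg h1]; linarith)
        simp only [sigmaMinus, e1, e2, sub_self, mul_zero]
      · simp only [sigmaMinus, thetaMinus_eq, if_neg (not_lt.mpr h1), zero_mul]
  have sep2 : tsupport (hProd N j h (fun x => χ x + sigmaMinus χ χ' x - χ' x)) ∩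
      Jminus (tsupport (hProd N j h (tauMinus χ' t))) = ∅ := by
    apply hProd_sep j h (show |t| - ε < ε by linarith)
    · intro x hx
      rcases lt_or_ge x 0 with h1 | h1
      · simp only [sigmaMinus, thetaMinus_eq, if_pos h1]; ring
      · have e1 : χ x = 1 := hχone x (by rw [abs_of_nonneg h1]; linarith)
        have e2 : χ' x = 1 := hχ'one x (by rw [abs_of_nonneg h1]; linarith)
        simp only [sigmaMinus, thetaMinus_eq, if_neg (not_lt.mpr h1), e1, e2]; ring
    · intro x hx
      rcases lt_or_ge x 0 with h1 | h1
      · have e1 : χ' x = 1 := hχ'one x (by rw [abs_of_neg h1]; linarith)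
        have e2 : χ' (x - t) = 1 := by
          apply hχ'one
          have h2 : |x - t| ≤ |x| + |t| := abs_sub x t
          rw [abs_of_neg h1] at h2; linarith
        simp only [tauMinus, e1, e2, sub_self, mul_zero]
      · simp only [tauMinus, thetaMinus_eq, if_neg (not_lt.mpr h1), zero_mul]
  -- the common glued function
  have W : (fun x : ℝ => χ x + tauMinus χ t x + sigmaMinus χ χ' (x - t)) =
      (fun x : ℝ => χ x + sigmaMinus χ χ' x + tauMinus χ' t x) := by
    funext x
    simp only [tauMinus, sigmaMinus, thetaMinus_eq]
    rcases lt_or_ge x 0 with h1 | h1 <;> rcases lt_or_ge (x - t) 0 with h2 | h2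
    · rw [if_pos h1, if_pos h2]; ring
    · have e1 : χ (x - t) = 1 := hχone _ (by rw [abs_of_nonneg h2]; linarith)
      have e2 : χ' (x - t) = 1 := hχ'one _ (by rw [abs_of_nonneg h2]; linarith)
      rw [if_pos h1, if_neg (not_lt.mpr h2), e1, e2]; ring
    · have e1 : χ (x - t) = 1 := hχone _ (by rw [abs_of_neg h2]; linarith)
      have e2 : χ' (x - t) = 1 := hχ'one _ (by rw [abs_of_neg h2]; linarith)
      rw [if_neg (not_lt.mpr h1), if_pos h2, e1, e2]; ring
    · rw [if_neg (not_lt.mpr h1), if_neg (not_lt.mpr h2)]; ring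
  -- hProd sum identities
  have eν : hProd N j h χ + hProd N j h (tauMinus χ t) =
      hProd N j h (fun x => χ x + tauMinus χ t x) := hProd_add_eq j h (fun x => rfl)
  have eρ : hProd N j h χ' + hProd N j h (tauMinus χ' t) =
      hProd N j h (fun x => χ' x + tauMinus χ' t x) := hProd_add_eq j h (fun x => rfl)
  have eσ : hProd N j h χ + hProd N j h (sigmaMinus χ χ') =
      hProd N j h (fun x => χ x + sigmaMinus χ χ' x) := hProd_add_eq j h (fun x => rfl)
  have eF1a : hProd N j h (fun x => χ x + tauMinus χ t x - χ (x - t)) +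
      hProd N j h (fun x => χ (x - t)) = hProd N j h (fun x => χ x + tauMinus χ t x) :=
    hProd_add_eq j h (fun x => by ring)
  have eF1b : hProd N j h (fun x => χ x + tauMinus χ t x) +
      hProd N j h (fun x => sigmaMinus χ χ' (x - t)) =
      hProd N j h (fun x => χ x + tauMinus χ t x + sigmaMinus χ χ' (x - t)) :=
    hProd_add_eq j h (fun x => rfl)
  have eF1c : hProd N j h (fun x => χ (x - t)) +
      hProd N j h (fun x => sigmaMinus χ χ' (x - t)) =
      hProd N j h (fun x => χ (x - t) + sigmaMinus χ χ' (x - t)) :=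
    hProd_add_eq j h (fun x => rfl)
  have eF2a : hProd N j h (fun x => χ x + sigmaMinus χ χ' x - χ' x) + hProd N j h χ' =
      hProd N j h (fun x => χ x + sigmaMinus χ χ' x) := hProd_add_eq j h (fun x => by ring)
  have eF2b : hProd N j h (fun x => χ x + sigmaMinus χ χ' x) +
      hProd N j h (tauMinus χ' t) =
      hProd N j h (fun x => χ x + sigmaMinus χ χ' x + tauMinus χ' t x) :=
    hProd_add_eq j h (fun x => rfl)
  -- the two causal factorizations
  have F1 := hS (hProd N j h (fun x => χ x + tauMinus χ t x - χ (x - t)))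
      (hProd N j h (fun x => χ (x - t)))
      (hProd N j h (fun x => sigmaMinus χ χ' (x - t))) T8 T3 T7 sep1
  rw [eF1a, eF1b, eF1c] at F1
  have F2 := hS (hProd N j h (fun x => χ x + sigmaMinus χ χ' x - χ' x))
      (hProd N j h χ') (hProd N j h (tauMinus χ' t)) T9 T2 T5 sep2
  rw [eF2a, eF2b, eρ, ← W] at F2
  have key := F1.symm.trans F2
  -- covariance rewrites
  have hα1 : α t (S (hProd N j h χ)) = S (hProd N j h (fun x => χ (x - t))) := by
    rw [hcov t _ T1]; rfl
  have hα2 : α t (S (hProd N j h (fun x => χ x + sigmaMinus χ χ' x))) =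
      S (hProd N j h (fun x => χ (x - t) + sigmaMinus χ χ' (x - t))) := by
    rw [hcov t _ Tμ]; rfl
  -- assemble
  simp only [cocycleU, relS]
  rw [eν, eρ, eσ, map_mul, map_inv, hα1, hα2]
  exact grp_aux _ _ _ _ _ _ _ key


end
end

section
/- Let m > 0, R > 0, and let f : ℝ⁴ → ℂ be smooth with supp(f) contained in the closed ball of radius R. For each fixed x ∈ ℝ³, the function F(z) := ∫_{ℝ³} (1/(2ω_p)) · e^{−i z ω_p} · e^{i⟨p,x⟩} · f̂(ω_p, p) dp is given by an absolutely convergent integral for every z ∈ ℂ with Im(z) ≤ 0, is holomorphic on the open lower half-plane {z ∈ ℂ : Im(z) < 0}, and is continuous on the closed lower half-plane {z ∈ ℂ : Im(z) ≤ 0}. -/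
/-!
STATEMENT 6: analyticity of the smeared propagator
`F(z) = ∫_{ℝ³} (1/(2ω_p)) e^{−izω_p} e^{i⟨p,x⟩} f̂(ω_p, p) dp`
in the lower half-plane, continuity on the closed lower half-plane, and absolute
convergence of the integral there.
-/

noncomputable section

open MeasureTheory Complex

/-- Euclidean `ℝ³`. -/
abbrev E3 := EuclideanSpace ℝ (Fin 3)

/-- `ω_p = √(‖p‖² + m²)`. -/
def omega (m : ℝ) (p : E3) : ℝ := Real.sqrt (‖p‖ ^ 2 + m ^ 2)

/-- Fourier transform `f̂(k) = ∫_{ℝ⁴} e^{i⟨k,y⟩} f(y) dy` on `ℝ⁴ = ℝ × ℝ³`,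
with the Euclidean inner product `⟨k,y⟩ = k₀y₀ + ⟨k⃗,y⃗⟩`. -/
def fourierHat (f : ℝ × E3 → ℂ) (k : ℝ × E3) : ℂ :=
  ∫ y : ℝ × E3, Complex.exp (Complex.I * Complex.ofReal (k.1 * y.1 + inner ℝ k.2 y.2)) * f y

/-- The integrand of `F(z)`. -/
def integrand6 (m : ℝ) (f : ℝ × E3 → ℂ) (x : E3) (z : ℂ) (p : E3) : ℂ :=
  (1 / (2 * (omega m p : ℂ))) * Complex.exp (-Complex.I * z * (omega m p : ℂ)) *
    Complex.exp (Complex.I * Complex.ofReal (inner ℝ p x)) * fourierHat f (omega m p, p)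

/-- `F(z) = ∫_{ℝ³} (1/(2ω_p)) e^{−izω_p} e^{i⟨p,x⟩} f̂(ω_p, p) dp`. -/
def F6 (m : ℝ) (f : ℝ × E3 → ℂ) (x : E3) (z : ℂ) : ℂ :=
  ∫ p : E3, integrand6 m f x z p


namespace Stmt6Proof

open FourierTransform

abbrev V4 := EuclideanSpace ℝ (Fin 4)

def Phi : V4 ≃ᵐ ℝ × E3 :=
  (MeasurableEquiv.toLp 2 (Fin 4 → ℝ)).symm.trans
    ((MeasurableEquiv.piFinSuccAbove (fun _ => ℝ) 0).trans
      ((MeasurableEquiv.refl ℝ).prodCongr (MeasurableEquiv.toLp 2 (Fin 3 → ℝ))))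

lemma Phi_apply (v : V4) : Phi v = (v 0, WithLp.toLp 2 (fun j => v (Fin.succ j))) := by
  simp [Phi, MeasurableEquiv.piFinSuccAbove]
  rfl

lemma step2 : MeasurePreserving (MeasurableEquiv.piFinSuccAbove (fun _ : Fin 4 => ℝ) 0)
    volume volume := by
  have h := measurePreserving_piFinSuccAbove (fun _ : Fin 4 => (volume : Measure ℝ)) 0
  rw [volume_pi, Measure.volume_eq_prod, volume_pi]
  exact h

lemma Phi_mp : MeasurePreserving Phi := by
  refine ((EuclideanSpace.volume_preserving_symm_measurableEquiv_toLp (Fin 4)).trans ?_)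
  refine MeasurePreserving.trans (μb := volume) step2 ?_
  have := ((MeasurePreserving.id (volume : Measure ℝ)).prod
      (EuclideanSpace.volume_preserving_symm_measurableEquiv_toLp (Fin 3)).symm)
  rw [Measure.volume_eq_prod, Measure.volume_eq_prod]
  exact this

lemma inner4 (u v : V4) :
    (inner ℝ u v : ℝ) = (Phi u).1 * (Phi v).1 + (inner ℝ (Phi u).2 (Phi v).2 : ℝ) := by
  rw [Phi_apply, Phi_apply]
  simp only [PiLp.inner_apply, PiLp.toLp_apply, RCLike.inner_apply, conj_trivial]
  rw [Fin.sum_univ_succ]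
  ring

lemma norm4 (u : V4) : ‖u‖ ^ 2 = (Phi u).1 ^ 2 + ‖(Phi u).2‖ ^ 2 := by
  have h := inner4 u u
  rw [real_inner_self_eq_norm_sq, real_inner_self_eq_norm_sq] at h
  nlinarith [h]

def PhiC : V4 →L[ℝ] ℝ × E3 :=
  (EuclideanSpace.proj (0 : Fin 4)).prod
    ((PiLp.continuousLinearEquiv 2 ℝ (fun _ : Fin 3 => ℝ)).symm.toContinuousLinearMap.comp
      (ContinuousLinearMap.pi (fun j : Fin 3 => EuclideanSpace.proj (Fin.succ j))))

lemma Phi_eq_PhiC : (Phi : V4 → ℝ × E3) = PhiC := by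
  funext v
  rw [Phi_apply]
  rfl

lemma Phi_contDiff : ContDiff ℝ (⊤ : ℕ∞) (Phi : V4 → ℝ × E3) := by
  rw [Phi_eq_PhiC]; exact PhiC.contDiff

lemma f_compactSupport {R : ℝ} {f : ℝ × E3 → ℂ}
    (hfsupp : ∀ y ∈ tsupport f, Real.sqrt (y.1 ^ 2 + ‖y.2‖ ^ 2) ≤ R) :
    HasCompactSupport f := by
  rw [HasCompactSupport]
  apply Metric.isCompact_of_isClosed_isBounded (isClosed_tsupport f)
  apply (Metric.isBounded_closedBall (x := (0 : ℝ × E3)) (r := R)).subset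
  intro y hy
  have h := hfsupp y hy
  have h1 : |y.1| ≤ R := by
    have h' := Real.sqrt_le_sqrt (show y.1 ^ 2 ≤ y.1 ^ 2 + ‖y.2‖ ^ 2 by nlinarith [sq_nonneg ‖y.2‖])
    rw [Real.sqrt_sq_eq_abs] at h'
    exact h'.trans h
  have h2 : ‖y.2‖ ≤ R := by
    have h' := Real.sqrt_le_sqrt (show ‖y.2‖ ^ 2 ≤ y.1 ^ 2 + ‖y.2‖ ^ 2 by nlinarith [sq_nonneg y.1])
    rw [Real.sqrt_sq (norm_nonneg y.2)] at h'
    exact h'.trans h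
  simp only [Metric.mem_closedBall, dist_zero_right]
  rw [Prod.norm_def]
  simp only [Real.norm_eq_abs, norm_norm]
  exact max_le h1 h2

def toSchwartz (g : V4 → ℂ) (hg : ContDiff ℝ (⊤ : ℕ∞) g) (hgc : HasCompactSupport g) :
    SchwartzMap V4 ℂ where
  toFun := g
  smooth' := hg
  decay' := by
    intro k n
    have hc : Continuous fun x : V4 => ‖x‖ ^ k * ‖iteratedFDeriv ℝ n g x‖ :=
      ((continuous_norm.pow k).mul
        ((hg.continuous_iteratedFDeriv (by exact_mod_cast le_top)).norm))
    have hcs : HasCompactSupport fun x : V4 => ‖x‖ ^ k * ‖iteratedFDeriv ℝ n g x‖ := by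
      have hn : HasCompactSupport fun x : V4 => ‖iteratedFDeriv ℝ n g x‖ :=
        (hgc.iteratedFDeriv n).comp_left norm_zero
      exact hn.mul_left
    obtain ⟨C, hC⟩ := hcs.exists_bound_of_continuous hc
    exact ⟨C, fun x => by simpa using hC x⟩

lemma key_identity {f : ℝ × E3 → ℂ} (k : ℝ × E3) :
    fourierHat f k = 𝓕 (f ∘ Phi)
      ((-(2 * Real.pi)⁻¹ : ℝ) • (Phi.symm k)) := by
  rw [Real.fourier_eq']
  rw [fourierHat]
  rw [← Phi_mp.integral_comp Phi.measurableEmbedding]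
  congr 1
  funext v
  rw [smul_eq_mul]
  congr 1
  have h2 : (inner ℝ (Phi.symm k) v : ℝ) = k.1 * (Phi v).1 + (inner ℝ k.2 (Phi v).2 : ℝ) := by
    have h := inner4 (Phi.symm k) v
    rwa [Phi.apply_symm_apply] at h
  have h1 : (-2 * Real.pi * (inner ℝ v ((-(2 * Real.pi)⁻¹ : ℝ) • (Phi.symm k)) : ℝ))
      = k.1 * (Phi v).1 + (inner ℝ k.2 (Phi v).2 : ℝ) := by
    rw [real_inner_smul_right, real_inner_comm, h2]
    field_simp
  rw [h1]
  ring

lemma decay_bound {R : ℝ} {f : ℝ × E3 → ℂ} (hfsmooth : ContDiff ℝ (⊤ : ℕ∞) f)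
    (hfsupp : ∀ y ∈ tsupport f, Real.sqrt (y.1 ^ 2 + ‖y.2‖ ^ 2) ≤ R) :
    ∃ C : ℝ, 0 ≤ C ∧ ∀ k : ℝ × E3, ‖fourierHat f k‖ ≤ C * ((1 + ‖k.2‖) ^ 4)⁻¹ := by
  classical
  have hg_smooth : ContDiff ℝ (⊤ : ℕ∞) (f ∘ Phi) := hfsmooth.comp Phi_contDiff
  have hg_cs : HasCompactSupport (f ∘ Phi) := by
    rw [HasCompactSupport]
    apply Metric.isCompact_of_isClosed_isBounded (isClosed_tsupport _)
    have hsub : tsupport (f ∘ Phi) ⊆ Metric.closedBall (0 : V4) R := by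
      apply closure_minimal _ Metric.isClosed_closedBall
      intro v hv
      have hPhi : Phi v ∈ tsupport f := subset_closure (by simpa using hv)
      have h := hfsupp _ hPhi
      have hn : ‖v‖ = Real.sqrt ((Phi v).1 ^ 2 + ‖(Phi v).2‖ ^ 2) := by
        rw [← norm4, Real.sqrt_sq (norm_nonneg v)]
      simp only [Metric.mem_closedBall, dist_zero_right]
      rw [hn]; exact h
    exact (Metric.isBounded_closedBall).subset hsub
  set gS : SchwartzMap V4 ℂ := toSchwartz (f ∘ Phi) hg_smooth hg_cs with hgS
  set G : SchwartzMap V4 ℂ := SchwartzMap.fourierTransformCLM ℂ gS with hG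
  have hGeq : ∀ w, G w = 𝓕 (f ∘ Phi) w := by
    intro w
    rw [hG, SchwartzMap.fourierTransformCLM_apply]
    rfl
  set C0 : ℝ := 2 ^ 4 * (Finset.Iic ((4 : ℕ), (0 : ℕ))).sup
    (fun m' => SchwartzMap.seminorm ℂ m'.1 m'.2) G with hC0
  have hdecay : ∀ w : V4, (1 + ‖w‖) ^ 4 * ‖G w‖ ≤ C0 := by
    intro w
    have := SchwartzMap.one_add_le_sup_seminorm_apply (𝕜 := ℂ) (m := ((4 : ℕ), (0 : ℕ)))
      (le_refl 4) (le_refl 0) G w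
    rwa [norm_iteratedFDeriv_zero] at this
  have hC0' : 0 ≤ C0 := by
    have := hdecay 0
    exact le_trans (by positivity) this
  refine ⟨(2 * Real.pi) ^ 4 * C0, by positivity, ?_⟩
  intro k
  set w : V4 := (-(2 * Real.pi)⁻¹ : ℝ) • (Phi.symm k) with hw
  have hkey : ‖fourierHat f k‖ = ‖G w‖ := by
    rw [key_identity k, ← hGeq]
  have h2pi : (1 : ℝ) ≤ 2 * Real.pi := by nlinarith [Real.pi_gt_three]
  have hwnorm : ‖k.2‖ ≤ (2 * Real.pi) * ‖w‖ := by
    have hn4 : ‖Phi.symm k‖ ^ 2 = k.1 ^ 2 + ‖k.2‖ ^ 2 := by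
      have := norm4 (Phi.symm k)
      rwa [Phi.apply_symm_apply] at this
    have h1 : ‖k.2‖ ≤ ‖Phi.symm k‖ := by
      nlinarith [norm_nonneg (Phi.symm k), norm_nonneg k.2, sq_nonneg k.1]
    have h2 : ‖w‖ = (2 * Real.pi)⁻¹ * ‖Phi.symm k‖ := by
      rw [hw, norm_smul, Real.norm_eq_abs, abs_neg,
        _root_.abs_of_nonneg (by positivity : (0:ℝ) ≤ (2 * Real.pi)⁻¹)]
    rw [h2]
    have : (2 * Real.pi) * ((2 * Real.pi)⁻¹ * ‖Phi.symm k‖) = ‖Phi.symm k‖ := by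
      rw [← mul_assoc, mul_inv_cancel₀ (by positivity : (2 * Real.pi) ≠ 0), one_mul]
    rw [this]; exact h1
  have hmono : (1 + ‖k.2‖) ^ 4 ≤ (2 * Real.pi) ^ 4 * (1 + ‖w‖) ^ 4 := by
    have hstep : 1 + ‖k.2‖ ≤ (2 * Real.pi) * (1 + ‖w‖) := by
      nlinarith [norm_nonneg w, hwnorm]
    calc (1 + ‖k.2‖) ^ 4 ≤ ((2 * Real.pi) * (1 + ‖w‖)) ^ 4 := by
          apply pow_le_pow_left₀ (by positivity) hstep
      _ = (2 * Real.pi) ^ 4 * (1 + ‖w‖) ^ 4 := by ring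
  have hfinal : (1 + ‖k.2‖) ^ 4 * ‖fourierHat f k‖ ≤ (2 * Real.pi) ^ 4 * C0 := by
    rw [hkey]
    calc (1 + ‖k.2‖) ^ 4 * ‖G w‖ ≤ ((2 * Real.pi) ^ 4 * (1 + ‖w‖) ^ 4) * ‖G w‖ := by
          apply mul_le_mul_of_nonneg_right hmono (norm_nonneg _)
      _ = (2 * Real.pi) ^ 4 * ((1 + ‖w‖) ^ 4 * ‖G w‖) := by ring
      _ ≤ (2 * Real.pi) ^ 4 * C0 := by
          apply mul_le_mul_of_nonneg_left (hdecay w) (by positivity)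
  have hpos : (0 : ℝ) < (1 + ‖k.2‖) ^ 4 := by positivity
  calc ‖fourierHat f k‖ = ((1 + ‖k.2‖) ^ 4 * ‖fourierHat f k‖) * ((1 + ‖k.2‖) ^ 4)⁻¹ := by
        field_simp
    _ ≤ ((2 * Real.pi) ^ 4 * C0) * ((1 + ‖k.2‖) ^ 4)⁻¹ := by
        apply mul_le_mul_of_nonneg_right hfinal (by positivity)

lemma omega_pos {m : ℝ} (hm : 0 < m) (p : E3) : 0 < omega m p :=
  Real.sqrt_pos.mpr (by positivity)

lemma omega_ge {m : ℝ} (hm : 0 < m) (p : E3) : m ≤ omega m p := by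
  have h' := Real.sqrt_le_sqrt (show m ^ 2 ≤ ‖p‖ ^ 2 + m ^ 2 by nlinarith [sq_nonneg ‖p‖])
  rwa [Real.sqrt_sq hm.le] at h'

lemma omega_cont (m : ℝ) : Continuous (omega m) :=
  Real.continuous_sqrt.comp ((continuous_norm.pow 2).add continuous_const)

lemma fourierHat_cont {f : ℝ × E3 → ℂ} (hfc : Continuous f) (hf_int : Integrable f) :
    Continuous (fourierHat f) := by
  have hnorm : ∀ (k y : ℝ × E3),
      ‖Complex.exp (Complex.I * Complex.ofReal (k.1 * y.1 + inner ℝ k.2 y.2)) * f y‖ = ‖f y‖ := by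
    intro k y
    rw [norm_mul]
    have : ‖Complex.exp (Complex.I * Complex.ofReal (k.1 * y.1 + inner ℝ k.2 y.2))‖ = 1 := by
      rw [Complex.norm_exp]
      simp
    rw [this, one_mul]
  apply continuous_of_dominated (bound := fun y => ‖f y‖)
  · intro k
    apply Continuous.aestronglyMeasurable
    apply Continuous.mul _ hfc
    apply Complex.continuous_exp.comp
    apply continuous_const.mul
    apply Complex.continuous_ofReal.comp
    exact (continuous_const.mul continuous_fst).add
      ((continuous_const.inner continuous_snd))
  · intro k
    filter_upwards with y
    rw [hnorm k y]
  · exact hf_int.norm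
  · filter_upwards with y
    apply Continuous.mul _ continuous_const
    apply Complex.continuous_exp.comp
    apply continuous_const.mul
    apply Complex.continuous_ofReal.comp
    exact (continuous_fst.mul continuous_const).add
      ((continuous_snd.inner continuous_const))

lemma integrand6_norm {m : ℝ} (hm : 0 < m) (f : ℝ × E3 → ℂ) (x : E3) (z : ℂ) (p : E3) :
    ‖integrand6 m f x z p‖ = (2 * omega m p)⁻¹ * Real.exp (z.im * omega m p) *
      ‖fourierHat f (omega m p, p)‖ := by
  have hω := omega_pos hm p
  have e1 : ‖(1 / (2 * ((omega m p : ℝ) : ℂ)))‖ = (2 * omega m p)⁻¹ := by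
    rw [norm_div, norm_one]
    have h : (2 * ((omega m p : ℝ) : ℂ)) = (((2 * omega m p : ℝ)) : ℂ) := by push_cast; ring
    rw [h, Complex.norm_real, Real.norm_eq_abs, _root_.abs_of_nonneg (by positivity), one_div]
  have e2 : ‖Complex.exp (-Complex.I * z * ((omega m p : ℝ) : ℂ))‖
      = Real.exp (z.im * omega m p) := by
    rw [Complex.norm_exp]
    congr 1
    simp [Complex.mul_re, Complex.mul_im]
  have e3 : ‖Complex.exp (Complex.I * Complex.ofReal (inner ℝ p x))‖ = 1 := by
    rw [Complex.norm_exp]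
    simp
  rw [integrand6, norm_mul, norm_mul, norm_mul, e1, e2, e3, mul_one]

lemma continuous_integrand6_z {m : ℝ} (f : ℝ × E3 → ℂ) (x : E3) (p : E3) :
    Continuous (fun z : ℂ => integrand6 m f x z p) := by
  unfold integrand6
  apply Continuous.mul _ continuous_const
  apply Continuous.mul _ continuous_const
  apply continuous_const.mul
  apply Complex.continuous_exp.comp
  exact (continuous_const.mul continuous_id).mul continuous_const

lemma hasDerivAt_integrand6 {m : ℝ} (f : ℝ × E3 → ℂ) (x : E3) (z : ℂ) (p : E3) :
    HasDerivAt (fun w : ℂ => integrand6 m f x w p)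
      ((-Complex.I * ((omega m p : ℝ) : ℂ)) * integrand6 m f x z p) z := by
  have h1 : HasDerivAt (fun w : ℂ => -Complex.I * w * ((omega m p : ℝ) : ℂ))
      (-Complex.I * ((omega m p : ℝ) : ℂ)) z := by
    simpa using ((hasDerivAt_id z).const_mul (-Complex.I)).mul_const ((omega m p : ℝ) : ℂ)
  have h2 := h1.cexp
  have h3 := (h2.const_mul (1 / (2 * ((omega m p : ℝ) : ℂ)))).mul_const
      (Complex.exp (Complex.I * Complex.ofReal (inner ℝ p x)))
  have h4 := h3.mul_const (fourierHat f (omega m p, p))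
  refine HasDerivAt.congr_deriv (f := fun w : ℂ => integrand6 m f x w p) h4 ?_
  simp only [integrand6]
  ring

end Stmt6Proof

theorem stmt6 (m R : ℝ) (hm : 0 < m) (hR : 0 < R) (f : ℝ × E3 → ℂ)
    (hfsmooth : ContDiff ℝ (⊤ : ℕ∞) f)
    -- `supp f` is contained in the closed Euclidean ball of radius `R`
    (hfsupp : ∀ y ∈ tsupport f, Real.sqrt (y.1 ^ 2 + ‖y.2‖ ^ 2) ≤ R)
    (x : E3) :
    (∀ z : ℂ, z.im ≤ 0 → Integrable (integrand6 m f x z)) ∧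
    DifferentiableOn ℂ (F6 m f x) {z : ℂ | z.im < 0} ∧
    ContinuousOn (F6 m f x) {z : ℂ | z.im ≤ 0} := by
  classical
  open Stmt6Proof in
  have hfc : Continuous f := hfsmooth.continuous
  have hfCS : HasCompactSupport f := Stmt6Proof.f_compactSupport hfsupp
  have hf_int : Integrable f := hfc.integrable_of_hasCompactSupport hfCS
  obtain ⟨C, hC0, hC⟩ := Stmt6Proof.decay_bound hfsmooth hfsupp
  set bnd : E3 → ℝ := fun p => C * ((1 + ‖p‖) ^ 4)⁻¹ with hbnd
  have hbnd_int : Integrable bnd := by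
    have h4 : ((Module.finrank ℝ E3 : ℝ)) < 4 := by
      rw [finrank_euclideanSpace_fin]
      norm_num
    have hint := integrable_one_add_norm (E := E3) (μ := volume) h4
    have heq : (fun x : E3 => (1 + ‖x‖) ^ (-(4:ℝ))) = fun x : E3 => ((1 + ‖x‖) ^ (4:ℕ))⁻¹ := by
      funext p
      rw [← Real.rpow_natCast (1 + ‖p‖) 4, ← Real.rpow_neg (by positivity)]
      norm_num
    rw [heq] at hint
    exact hint.const_mul C
  have hB : ∀ p : E3, ‖fourierHat f (omega m p, p)‖ ≤ bnd p := fun p => hC (omega m p, p)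
  have hbnd_nonneg : ∀ p, 0 ≤ bnd p := fun p => by positivity
  -- continuity of the integrand in `p`
  have hmeas : ∀ z : ℂ, Continuous (fun p => integrand6 m f x z p) := by
    intro z
    have hωc : Continuous (omega m) := Stmt6Proof.omega_cont m
    have hωC : Continuous (fun p : E3 => ((omega m p : ℝ) : ℂ)) :=
      Complex.continuous_ofReal.comp hωc
    have hfhc : Continuous (fun p : E3 => fourierHat f (omega m p, p)) :=
      (Stmt6Proof.fourierHat_cont hfc hf_int).comp (hωc.prodMk continuous_id)
    unfold integrand6
    apply Continuous.mul _ hfhc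
    apply Continuous.mul
    · apply Continuous.mul
      · apply Continuous.div continuous_const (continuous_const.mul hωC)
        intro p
        have := Stmt6Proof.omega_pos hm p
        simp only [ne_eq, Pi.mul_apply, mul_eq_zero, OfNat.ofNat_ne_zero, false_or]
        exact_mod_cast Complex.ofReal_ne_zero.mpr this.ne'
      · exact Complex.continuous_exp.comp (continuous_const.mul hωC)
    · apply Complex.continuous_exp.comp
      apply continuous_const.mul
      apply Complex.continuous_ofReal.comp
      exact continuous_id.inner continuous_const
  -- the basic norm bound
  have hbd : ∀ z : ℂ, z.im ≤ 0 → ∀ p : E3,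
      ‖integrand6 m f x z p‖ ≤ (2 * m)⁻¹ * bnd p := by
    intro z hz p
    rw [Stmt6Proof.integrand6_norm hm f x z p]
    have hω := Stmt6Proof.omega_pos hm p
    have hωm := Stmt6Proof.omega_ge hm p
    have he : Real.exp (z.im * omega m p) ≤ 1 := by
      rw [← Real.exp_zero]
      exact Real.exp_le_exp.mpr (mul_nonpos_of_nonpos_of_nonneg hz hω.le)
    have hi : (2 * omega m p)⁻¹ ≤ (2 * m)⁻¹ := by
      apply inv_anti₀ (by positivity)
      linarith
    calc (2 * omega m p)⁻¹ * Real.exp (z.im * omega m p) * ‖fourierHat f (omega m p, p)‖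
        ≤ (2 * m)⁻¹ * 1 * bnd p := by
          apply mul_le_mul
          · apply mul_le_mul hi he (Real.exp_pos _).le (by positivity)
          · exact hB p
          · exact norm_nonneg _
          · positivity
      _ = (2 * m)⁻¹ * bnd p := by ring
  have hInt : ∀ z : ℂ, z.im ≤ 0 → Integrable (integrand6 m f x z) := by
    intro z hz
    refine (hbnd_int.const_mul ((2 * m)⁻¹)).mono' ((hmeas z).aestronglyMeasurable) ?_
    filter_upwards with p
    exact hbd z hz p
  refine ⟨hInt, ?_, ?_⟩
  · -- differentiability on the open lower half-plane
    intro z₀ hz₀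
    simp only [Set.mem_setOf_eq] at hz₀
    set ε : ℝ := -z₀.im / 2 with hε
    have hεpos : 0 < ε := by rw [hε]; linarith
    have hball : ∀ z ∈ Metric.ball z₀ ε, z.im ≤ 0 := by
      intro z hz
      have h1 : |(z - z₀).im| ≤ ‖z - z₀‖ := Complex.abs_im_le_norm _
      rw [Complex.sub_im] at h1
      have h2 : ‖z - z₀‖ < ε := by rwa [Metric.mem_ball, Complex.dist_eq] at hz
      have h3 := abs_le.mp (le_of_lt (lt_of_le_of_lt h1 h2))
      rw [hε] at h3
      linarith [h3.2]
    have key := hasDerivAt_integral_of_dominated_loc_of_deriv_le (μ := volume)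
      (F := fun z p => integrand6 m f x z p)
      (F' := fun z p => (-Complex.I * ((omega m p : ℝ) : ℂ)) * integrand6 m f x z p)
      (bound := fun p => 2⁻¹ * bnd p) (Metric.ball_mem_nhds z₀ hεpos)
      (Filter.Eventually.of_forall fun z => (hmeas z).aestronglyMeasurable)
      (hInt z₀ hz₀.le)
      (Continuous.aestronglyMeasurable (by
        exact (continuous_const.mul (Complex.continuous_ofReal.comp
          (Stmt6Proof.omega_cont m))).mul (hmeas z₀)))
      (by
        filter_upwards with p
        intro z hz
        have hω := Stmt6Proof.omega_pos hm p
        rw [norm_mul, Stmt6Proof.integrand6_norm hm f x z p]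
        have hnI : ‖-Complex.I * ((omega m p : ℝ) : ℂ)‖ = omega m p := by
          rw [norm_mul, norm_neg, Complex.norm_I, one_mul, Complex.norm_real,
            Real.norm_eq_abs, _root_.abs_of_nonneg hω.le]
        rw [hnI]
        have he : Real.exp (z.im * omega m p) ≤ 1 := by
          rw [← Real.exp_zero]
          exact Real.exp_le_exp.mpr (mul_nonpos_of_nonpos_of_nonneg (hball z hz) hω.le)
        have heq : omega m p * ((2 * omega m p)⁻¹ * Real.exp (z.im * omega m p) *
            ‖fourierHat f (omega m p, p)‖)
            = 2⁻¹ * (Real.exp (z.im * omega m p) * ‖fourierHat f (omega m p, p)‖) := by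
          field_simp
        rw [heq]
        have h1 : Real.exp (z.im * omega m p) * ‖fourierHat f (omega m p, p)‖ ≤ bnd p := by
          calc Real.exp (z.im * omega m p) * ‖fourierHat f (omega m p, p)‖
              ≤ 1 * bnd p := by
                apply mul_le_mul he (hB p) (norm_nonneg _) zero_le_one
            _ = bnd p := one_mul _
        nlinarith [h1])
      (hbnd_int.const_mul (2⁻¹ : ℝ))
      (by
        filter_upwards with p
        intro z hz
        exact Stmt6Proof.hasDerivAt_integrand6 f x z p)
    have hF6 : F6 m f x = fun z => ∫ p, integrand6 m f x z p := rfl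
    rw [hF6]
    exact key.2.differentiableAt.differentiableWithinAt
  · -- continuity on the closed lower half-plane
    have hF6 : F6 m f x = fun z => ∫ p, integrand6 m f x z p := rfl
    rw [hF6]
    apply continuousOn_of_dominated (bound := fun p => (2 * m)⁻¹ * bnd p)
    · intro z hz
      exact (hmeas z).aestronglyMeasurable
    · intro z hz
      simp only [Set.mem_setOf_eq] at hz
      filter_upwards with p
      exact hbd z hz p
    · exact hbnd_int.const_mul _
    · filter_upwards with p
      exact (Stmt6Proof.continuous_integrand6_z f x p).continuousOn

end
end

section
/- Let n, k ∈ ℕ and let s, r : {1, …, k} → {0, 1, …, n} satisfy s(l) < r(l) for every l. Let V⁺ := {(p₀, p⃗) ∈ ℝ × ℝ³ : p₀ ≥ ‖p⃗‖} be the closed forward lightcone. Suppose p : {1, …, k} → ℝ × ℝ³ satisfies p(l) ∈ V⁺ for all l (or alternatively p(l) ∈ −V⁺ for all l), and that for every m ∈ {0, 1, …, n} the momentum conservation condition ∑_{l : s(l) = m} p(l) = ∑_{l : r(l) = m} p(l) holds (empty sums being 0). Then p(l) = 0 for every l ∈ {1, …, k}. -/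
/-!
STATEMENT 13: momentum conservation along a graph with ordered lines
(`s(l) < r(l)`) forces all momenta lying in the closed forward lightcone
(or all in the closed backward lightcone) to vanish.
-/

noncomputable section

/-- A momentum `(p₀, p⃗) ∈ ℝ × ℝ³` lies in the closed forward lightcone `V⁺`. -/
def InForwardCone (q : ℝ × E3) : Prop := ‖q.2‖ ≤ q.1

/-- A momentum lies in the closed backward lightcone `−V⁺`. -/
def InBackwardCone (q : ℝ × E3) : Prop := ‖q.2‖ ≤ -q.1

lemma sum_zero_of_cone {ι : Type*} (t : Finset ι) (q : ι → ℝ × E3)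
    (h : ∀ i ∈ t, InForwardCone (q i)) (hs : ∑ i ∈ t, q i = 0) :
    ∀ i ∈ t, q i = 0 := by
  have h1 : ∑ i ∈ t, (q i).1 = 0 := by
    have := congrArg Prod.fst hs
    simpa [Prod.fst_sum] using this
  have hnn : ∀ i ∈ t, 0 ≤ (q i).1 := fun i hi => (norm_nonneg _).trans (h i hi)
  have hz := (Finset.sum_eq_zero_iff_of_nonneg hnn).mp h1
  intro i hi
  have h0 : (q i).1 = 0 := hz i hi
  have h2 : ‖(q i).2‖ ≤ 0 := h0 ▸ h i hi
  exact Prod.ext h0 (norm_le_zero_iff.mp h2)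

lemma stmt13_fwd (n k : ℕ) (s r : Fin k → Fin (n + 1)) (hsr : ∀ l, s l < r l)
    (p : Fin k → ℝ × E3)
    (hcone : ∀ l, InForwardCone (p l))
    (hcons : ∀ m : Fin (n + 1),
      ∑ l ∈ Finset.univ.filter (fun l => s l = m), p l =
        ∑ l ∈ Finset.univ.filter (fun l => r l = m), p l) :
    ∀ l, p l = 0 := by
  have key : ∀ m : ℕ, ∀ l, (s l : ℕ) = m → p l = 0 := by
    intro m
    induction m using Nat.strong_induction_on with
    | _ m ih =>
      intro l hl
      have hm : m < n + 1 := hl ▸ (s l).isLt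
      have hrhs : ∑ l ∈ Finset.univ.filter (fun l => r l = ⟨m, hm⟩), p l = 0 := by
        apply Finset.sum_eq_zero
        intro x hx
        simp only [Finset.mem_filter] at hx
        have hlt : (s x : ℕ) < m := by
          have h := hsr x
          rw [hx.2] at h
          exact h
        exact ih _ hlt x rfl
      have hlhs := (hcons ⟨m, hm⟩).trans hrhs
      exact sum_zero_of_cone _ p (fun i _ => hcone i) hlhs l
        (by simp [Fin.ext_iff, hl])
  intro l
  exact key _ l rfl

theorem stmt13 (n k : ℕ) (s r : Fin k → Fin (n + 1)) (hsr : ∀ l, s l < r l)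
    (p : Fin k → ℝ × E3)
    (hcone : (∀ l, InForwardCone (p l)) ∨ (∀ l, InBackwardCone (p l)))
    (hcons : ∀ m : Fin (n + 1),
      ∑ l ∈ Finset.univ.filter (fun l => s l = m), p l =
        ∑ l ∈ Finset.univ.filter (fun l => r l = m), p l) :
    ∀ l, p l = 0 := by
  rcases hcone with hf | hb
  · exact stmt13_fwd n k s r hsr p hf hcons
  · have h := stmt13_fwd n k s r hsr (fun l => -(p l))
      (fun l => by simpa [InForwardCone, InBackwardCone] using hb l)
      (fun m => by
        simp only [Finset.sum_neg_distrib]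
        exact congrArg Neg.neg (hcons m))
    intro l
    exact neg_eq_zero.mp (h l)

end
end

section
/- Let A be a complex unital Banach algebra, let α : ℝ → Aut(A) be a group homomorphism into the isometric algebra automorphisms of A such that t ↦ α_t(a) is continuous for every a ∈ A, and let K ∈ A. For t ≥ 0 define the Dyson series U(t) := 1 + ∑_{n=1}^∞ iⁿ ∫_0^t dt₁ ∫_0^{t₁} dt₂ ⋯ ∫_0^{t_{n−1}} dt_n · α_{t_n}(K) ⋯ α_{t₁}(K). Then: (i) the series converges absolutely in A (the n-th term has norm at most (t‖K‖)ⁿ/n!); (ii) U is differentiable with U(0) = 1 and (1/i)·(d/dt)U(t) = U(t)·α_t(K); and (iii) U satisfies the co-cycle condition U(t + s) = U(t)·α_t(U(s)) for all t, s ≥ 0. -/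
/-!
STATEMENT 14: the Dyson series
`U(t) = 1 + ∑_{n≥1} iⁿ ∫_0^t dt₁ ∫_0^{t₁} dt₂ ⋯ ∫_0^{t_{n−1}} dt_n α_{t_n}(K)⋯α_{t₁}(K)`
in a complex unital Banach algebra: absolute convergence with the factorial bound,
the differential equation `(1/i) U' (t) = U(t)·α_t(K)` with `U(0) = 1`, and the
co-cycle condition `U(t+s) = U(t)·α_t(U(s))`.

The iterated integral is written as a Bochner integral over the ordered simplex
`{u : Fin n → ℝ | 0 ≤ u i ≤ t, u monotone}` of the ordered product
`α_{u 0}(K) · α_{u 1}(K) ⋯ α_{u (n−1)}(K)` (latest time rightmost).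
-/

noncomputable section

open MeasureTheory

/-- `n`-th term of the Dyson series: the ordered-simplex iterated integral of
the time-ordered product of `n` copies of `α_{·}(K)`. -/
def dysonTerm {A : Type*} [NormedRing A] [NormedAlgebra ℂ A] [CompleteSpace A]
    (α : ℝ → A ≃ₐ[ℂ] A) (K : A) (n : ℕ) (t : ℝ) : A :=
  ∫ u in {u : Fin n → ℝ | (∀ i, 0 ≤ u i ∧ u i ≤ t) ∧ Monotone u},
    (List.ofFn (fun i => α (u i) K)).prod

/-- The Dyson series `U(t)`. -/
def dysonU {A : Type*} [NormedRing A] [NormedAlgebra ℂ A] [CompleteSpace A]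
    (α : ℝ → A ≃ₐ[ℂ] A) (K : A) (t : ℝ) : A :=
  1 + ∑' n : ℕ, Complex.I ^ (n + 1) • dysonTerm α K (n + 1) t

set_option linter.unusedSectionVars false

namespace Dyson14

variable {A : Type*} [NormedRing A] [NormedAlgebra ℂ A] [CompleteSpace A]
variable (α : ℝ → A ≃ₐ[ℂ] A) (K : A)

/-- The simplex. -/
def S (n : ℕ) (t : ℝ) : Set (Fin n → ℝ) :=
  {u : Fin n → ℝ | (∀ i, 0 ≤ u i ∧ u i ≤ t) ∧ Monotone u}

/-- The time-ordered product integrand. -/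
def P {n : ℕ} (u : Fin n → ℝ) : A := (List.ofFn (fun i => α (u i) K)).prod

/-- Iterated-integral form of the Dyson terms. -/
def T : ℕ → ℝ → A
  | 0 => fun _ => 1
  | (n+1) => fun t => ∫ s in (0:ℝ)..t, T n s * α s K

section basic

variable (hcont : ∀ a : A, Continuous fun t : ℝ => α t a)
  (hiso : ∀ (t : ℝ) (a : A), ‖α t a‖ = ‖a‖)

lemma S_closed (n : ℕ) (t : ℝ) : IsClosed (S n t) := by
  have h : S n t = (⋂ i, ({u : Fin n → ℝ | 0 ≤ u i} ∩ {u | u i ≤ t})) ∩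
      ⋂ (i : Fin n) (j : Fin n) (_ : i ≤ j), {u : Fin n → ℝ | u i ≤ u j} := by
    ext u
    simp only [S, Set.mem_setOf_eq, Set.mem_inter_iff, Set.mem_iInter]
    constructor
    · exact fun h => ⟨fun i => h.1 i, fun i j hij => h.2 hij⟩
    · exact fun h => ⟨fun i => h.1 i, fun i j hij => h.2 i j hij⟩
  rw [h]
  exact (isClosed_iInter fun i =>
      (isClosed_le continuous_const (continuous_apply i)).inter
        (isClosed_le (continuous_apply i) continuous_const)).inter
    (isClosed_iInter fun i => isClosed_iInter fun j => isClosed_iInter fun _ =>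
      isClosed_le (continuous_apply i) (continuous_apply j))

lemma S_compact (n : ℕ) (t : ℝ) : IsCompact (S n t) := by
  refine (isCompact_univ_pi fun _ : Fin n => isCompact_Icc (a := (0:ℝ)) (b := t)).of_isClosed_subset
    (S_closed n t) ?_
  intro u hu
  rw [Set.mem_univ_pi]
  exact fun i => ⟨(hu.1 i).1, (hu.1 i).2⟩

include hcont in
lemma P_cont (n : ℕ) : Continuous fun u : Fin n → ℝ => (P α K u) := by
  unfold P
  simp only [List.ofFn_eq_map]
  exact continuous_list_prod _ fun i _ => (hcont K).comp (continuous_apply i)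

include hcont in
lemma T_cont (n : ℕ) : Continuous (T α K n) := by
  induction n with
  | zero => exact continuous_const
  | succ n ih =>
    have hg : Continuous fun s => T α K n s * α s K := ih.mul (hcont K)
    rw [continuous_iff_continuousAt]
    exact fun t => ((hg.integral_hasStrictDerivAt 0 t).hasDerivAt).continuousAt

include hcont in
lemma T_hasDerivAt (n : ℕ) (t : ℝ) :
    HasDerivAt (T α K (n+1)) (T α K n t * α t K) t :=
  ((((T_cont α K hcont n).mul (hcont K)).integral_hasStrictDerivAt 0 t).hasDerivAt)

lemma integral_abs_pow_bound (n : ℕ) (c : ℝ) (f : ℝ → A)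
    (hc : 0 ≤ c) (hfc : Continuous f) (hf : ∀ s : ℝ, ‖f s‖ ≤ |s| ^ n * c) (t : ℝ) :
    ‖∫ s in (0:ℝ)..t, f s‖ ≤ |t| ^ (n+1) * c / (n+1) := by
  have hbound : IntervalIntegrable (fun s : ℝ => |s| ^ n * c) volume 0 t :=
    (((continuous_abs.pow n).mul continuous_const)).intervalIntegrable 0 t
  have h1 : ‖∫ s in (0:ℝ)..t, f s‖ ≤ |∫ s in (0:ℝ)..t, |s| ^ n * c| :=
    intervalIntegral.norm_integral_le_abs_of_norm_le (Filter.Eventually.of_forall fun s => hf s)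
      hbound
  refine h1.trans (le_of_eq ?_)
  rcases le_or_gt 0 t with ht | ht
  · have h2 : ∀ s ∈ Set.uIcc (0:ℝ) t, |s| ^ n * c = s ^ n * c := by
      intro s hs
      rw [Set.uIcc_of_le ht] at hs
      rw [abs_of_nonneg hs.1]
    rw [intervalIntegral.integral_congr h2, intervalIntegral.integral_mul_const, integral_pow,
      zero_pow (Nat.succ_ne_zero n), sub_zero,
      abs_of_nonneg (mul_nonneg (div_nonneg (pow_nonneg ht _) (by positivity)) hc),
      abs_of_nonneg ht]
    ring
  · have hnt : (0:ℝ) ≤ -t := by linarith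
    rw [intervalIntegral.integral_symm, abs_neg]
    have h2 : ∀ s ∈ Set.uIcc t 0, |s| ^ n * c = (-s) ^ n * c := by
      intro s hs
      rw [Set.uIcc_of_le ht.le] at hs
      rw [abs_of_nonpos hs.2]
    rw [intervalIntegral.integral_congr h2]
    have h3 : (∫ x in t..(0:ℝ), (-x) ^ n * c) = ∫ x in (-(0:ℝ))..(-t), x ^ n * c :=
      intervalIntegral.integral_comp_neg (fun x => x ^ n * c)
    rw [h3, neg_zero, intervalIntegral.integral_mul_const, integral_pow,
      zero_pow (Nat.succ_ne_zero n), sub_zero,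
      abs_of_nonneg (mul_nonneg (div_nonneg (pow_nonneg hnt _) (by positivity)) hc),
      abs_of_neg ht]
    ring

include hiso hcont in
lemma Tmul_norm_le (n : ℕ) (y : ℝ) :
    ‖T α K n y * α y K‖ ≤ (|y| * ‖K‖) ^ n / n.factorial * ‖K‖ := by
  induction n generalizing y with
  | zero => simp [T, hiso]
  | succ n ih =>
    have hfac : ((n.factorial : ℝ)) ≠ 0 := Nat.cast_ne_zero.mpr n.factorial_ne_zero
    have hn1 : ((n : ℝ) + 1) ≠ 0 := by positivity
    have hc : (0:ℝ) ≤ ‖K‖ ^ n / n.factorial * ‖K‖ := by positivity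
    have hf : ∀ s : ℝ, ‖T α K n s * α s K‖ ≤ |s| ^ n * (‖K‖ ^ n / n.factorial * ‖K‖) := by
      intro s
      refine (ih s).trans (le_of_eq ?_)
      rw [mul_pow]; ring
    have hInt := integral_abs_pow_bound n _ _ hc ((T_cont α K hcont n).mul (hcont K)) hf y
    have hT : ‖T α K (n+1) y‖ ≤ |y| ^ (n+1) * (‖K‖ ^ n / n.factorial * ‖K‖) / (n+1) := hInt
    calc ‖T α K (n+1) y * α y K‖ ≤ ‖T α K (n+1) y‖ * ‖α y K‖ := norm_mul_le _ _
      _ = ‖T α K (n+1) y‖ * ‖K‖ := by rw [hiso]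
      _ ≤ (|y| ^ (n+1) * (‖K‖ ^ n / n.factorial * ‖K‖) / (n+1)) * ‖K‖ := by
          gcongr
      _ = (|y| * ‖K‖) ^ (n+1) / (n+1).factorial * ‖K‖ := by
          rw [mul_pow, Nat.factorial_succ]
          push_cast
          field_simp
          ring

include hiso hcont in
lemma T_succ_norm_le (n : ℕ) (t : ℝ) :
    ‖T α K (n+1) t‖ ≤ (|t| * ‖K‖) ^ (n+1) / (n+1).factorial := by
  have hfac : ((n.factorial : ℝ)) ≠ 0 := Nat.cast_ne_zero.mpr n.factorial_ne_zero
  have hn1 : ((n : ℝ) + 1) ≠ 0 := by positivity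
  have hc : (0:ℝ) ≤ ‖K‖ ^ n / n.factorial * ‖K‖ := by positivity
  have hf : ∀ s : ℝ, ‖T α K n s * α s K‖ ≤ |s| ^ n * (‖K‖ ^ n / n.factorial * ‖K‖) := by
    intro s
    refine (Tmul_norm_le α K hcont hiso n s).trans (le_of_eq ?_)
    rw [mul_pow]; ring
  have hInt := integral_abs_pow_bound n _ _ hc ((T_cont α K hcont n).mul (hcont K)) hf t
  refine hInt.trans (le_of_eq ?_)
  rw [mul_pow, Nat.factorial_succ]
  push_cast
  field_simp
  ring

lemma setIntegral_mul_right {X : Type*} [MeasurableSpace X] {μ : Measure X}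
    (f : X → A) (B : A) (hf : Integrable f μ) :
    ∫ x, f x * B ∂μ = (∫ x, f x ∂μ) * B := by
  have := ((ContinuousLinearMap.mul ℂ A).flip B).integral_comp_comm hf
  simpa using this

lemma P_snoc (n : ℕ) (v : Fin n → ℝ) (s : ℝ) :
    P α K (Fin.snoc v s) = P α K v * α s K := by
  unfold P
  rw [List.ofFn_succ']
  simp [List.prod_concat]

lemma snoc_mem_S_iff (n : ℕ) (t s : ℝ) (v : Fin n → ℝ) :
    ((Fin.snoc v s : Fin (n+1) → ℝ) ∈ S (n+1) t) ↔ (s ∈ Set.Icc 0 t ∧ v ∈ S n s) := by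
  constructor
  · rintro ⟨hb, hm⟩
    have hl1 := (hb (Fin.last n)).1
    have hl2 := (hb (Fin.last n)).2
    rw [Fin.snoc_last] at hl1 hl2
    refine ⟨⟨hl1, hl2⟩, ⟨?_, ?_⟩⟩
    · intro i
      constructor
      · have h := (hb i.castSucc).1
        rwa [Fin.snoc_castSucc] at h
      · have h := hm (Fin.le_last i.castSucc)
        rwa [Fin.snoc_castSucc, Fin.snoc_last] at h
    · intro i j hij
      have h := hm (Fin.castSucc_le_castSucc_iff.mpr hij)
      rwa [Fin.snoc_castSucc, Fin.snoc_castSucc] at h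
  · rintro ⟨⟨hs0, hst⟩, hv, hm⟩
    constructor
    · intro i
      rcases Fin.eq_castSucc_or_eq_last i with ⟨j, rfl⟩ | rfl
      · rw [Fin.snoc_castSucc]
        exact ⟨(hv j).1, (hv j).2.trans hst⟩
      · rw [Fin.snoc_last]
        exact ⟨hs0, hst⟩
    · intro i j hij
      rcases Fin.eq_castSucc_or_eq_last j with ⟨j', rfl⟩ | rfl
      · rcases Fin.eq_castSucc_or_eq_last i with ⟨i', rfl⟩ | rfl
        · rw [Fin.snoc_castSucc, Fin.snoc_castSucc]
          exact hm (Fin.castSucc_le_castSucc_iff.mp hij)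
        · exact absurd hij (not_le.mpr (Fin.castSucc_lt_last j'))
      · rw [Fin.snoc_last]
        rcases Fin.eq_castSucc_or_eq_last i with ⟨i', rfl⟩ | rfl
        · rw [Fin.snoc_castSucc]
          exact (hv i').2
        · rw [Fin.snoc_last]

include hcont in
lemma dysonTerm_succ (n : ℕ) {t : ℝ} (ht : 0 ≤ t) :
    dysonTerm α K (n+1) t = ∫ s in (0:ℝ)..t, dysonTerm α K n s * α s K := by
  classical
  set e := (MeasurableEquiv.piFinSuccAbove (fun _ : Fin (n+1) => ℝ) (Fin.last n)).symm with he
  have hmp : MeasurePreserving e :=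
    (volume_preserving_piFinSuccAbove (fun _ : Fin (n+1) => ℝ) (Fin.last n)).symm _
  have hQ : ∀ p : ℝ × (Fin n → ℝ), e p = Fin.snoc p.2 p.1 := by
    intro p
    rw [he]
    rw [MeasurableEquiv.piFinSuccAbove_symm_apply]
    exact Fin.insertNth_last' p.1 p.2
  have hSmeas : MeasurableSet (S (n+1) t) := (S_closed (n+1) t).measurableSet
  have hPint : IntegrableOn (fun u : Fin (n+1) → ℝ => P α K u) (S (n+1) t) :=
    ((P_cont α K hcont (n+1)).continuousOn).integrableOn_compact (S_compact (n+1) t)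
  have hpremeas : MeasurableSet (e ⁻¹' (S (n+1) t)) := hSmeas.preimage e.measurable
  -- indicator function on the product space
  set F : ℝ × (Fin n → ℝ) → A := Set.indicator (e ⁻¹' (S (n+1) t)) (fun p => P α K (e p)) with hF
  have hF_of_mem : ∀ p, p ∈ e ⁻¹' (S (n+1) t) → F p = P α K (e p) :=
    fun p hp => Set.indicator_of_mem hp _
  have hF_of_not : ∀ p, p ∉ e ⁻¹' (S (n+1) t) → F p = 0 :=
    fun p hp => Set.indicator_of_notMem hp _
  have hIntF : Integrable F ((volume : Measure ℝ).prod (volume : Measure (Fin n → ℝ))) := by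
    have h1 : Integrable ((Set.indicator (S (n+1) t) (P α K)) ∘ e)
        ((volume : Measure ℝ).prod (volume : Measure (Fin n → ℝ))) :=
      (hmp.integrable_comp_emb e.measurableEmbedding).mpr
        ((integrable_indicator_iff hSmeas).mpr hPint)
    refine h1.congr (Filter.Eventually.of_forall fun p => ?_)
    show Set.indicator (S (n+1) t) (P α K) (e p) = F p
    by_cases hp : p ∈ e ⁻¹' (S (n+1) t)
    · rw [Set.indicator_of_mem (Set.mem_preimage.mp hp), hF_of_mem p hp]
    · rw [Set.indicator_of_notMem (fun h => hp (Set.mem_preimage.mpr h)), hF_of_not p hp]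
  -- step 1: transfer to the product space
  have h1 : dysonTerm α K (n+1) t
      = ∫ p in e ⁻¹' (S (n+1) t), P α K (e p)
          ∂((volume : Measure ℝ).prod (volume : Measure (Fin n → ℝ))) :=
    (hmp.setIntegral_preimage_emb e.measurableEmbedding (fun u => P α K u) (S (n+1) t)).symm
  -- step 2: to indicator and iterated integral
  have h2 : (∫ p in e ⁻¹' (S (n+1) t), P α K (e p)
          ∂((volume : Measure ℝ).prod (volume : Measure (Fin n → ℝ))))
      = ∫ s : ℝ, ∫ v : Fin n → ℝ, F (s, v) := by
    rw [← integral_indicator hpremeas]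
    exact integral_prod F hIntF
  -- step 3: evaluate the inner integral
  have h4 : ∀ s : ℝ, (∫ v : Fin n → ℝ, F (s, v))
      = Set.indicator (Set.Icc 0 t) (fun s => dysonTerm α K n s * α s K) s := by
    intro s
    by_cases hs : s ∈ Set.Icc (0:ℝ) t
    · have hset : ∀ v : Fin n → ℝ, ((s, v) ∈ e ⁻¹' (S (n+1) t)) ↔ v ∈ S n s := by
        intro v
        rw [Set.mem_preimage, hQ (s, v), snoc_mem_S_iff n t s v]
        simp [hs]
      have hfun : (fun v : Fin n → ℝ => F (s, v))
          = Set.indicator (S n s) (fun v => P α K v * α s K) := by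
        funext v
        by_cases hv : v ∈ S n s
        · rw [hF_of_mem (s, v) ((hset v).mpr hv), Set.indicator_of_mem hv, hQ (s, v)]
          exact P_snoc α K n v s
        · rw [hF_of_not (s, v) (fun h => hv ((hset v).mp h)),
            Set.indicator_of_notMem hv]
      rw [hfun, integral_indicator (S_closed n s).measurableSet, Set.indicator_of_mem hs]
      have hPn : IntegrableOn (fun v : Fin n → ℝ => P α K v) (S n s) :=
        ((P_cont α K hcont n).continuousOn).integrableOn_compact (S_compact n s)
      rw [setIntegral_mul_right _ _ hPn]
      rfl
    · have hzero : ∀ v : Fin n → ℝ, F (s, v) = 0 := by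
        intro v
        rw [hF]
        apply Set.indicator_of_notMem
        intro h
        rw [Set.mem_preimage, hQ (s, v), snoc_mem_S_iff n t s v] at h
        exact hs h.1
      rw [Set.indicator_of_notMem hs]
      simp [hzero]
  rw [h1, h2]
  calc (∫ s : ℝ, ∫ v : Fin n → ℝ, F (s, v))
      = ∫ s : ℝ, Set.indicator (Set.Icc 0 t) (fun s => dysonTerm α K n s * α s K) s :=
        by exact integral_congr_ae (Filter.Eventually.of_forall h4)
    _ = ∫ s in Set.Icc (0:ℝ) t, dysonTerm α K n s * α s K :=
        integral_indicator measurableSet_Icc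
    _ = ∫ s in Set.Ioc (0:ℝ) t, dysonTerm α K n s * α s K :=
        integral_Icc_eq_integral_Ioc
    _ = ∫ s in (0:ℝ)..t, dysonTerm α K n s * α s K :=
        (intervalIntegral.integral_of_le ht).symm

include hcont in
lemma dysonTerm_eq (n : ℕ) : ∀ {t : ℝ}, 0 ≤ t → dysonTerm α K n t = T α K n t := by
  induction n with
  | zero =>
    intro t ht
    have hU : S 0 t = (Set.univ : Set (Fin 0 → ℝ)) := by
      ext u
      simp only [S, Set.mem_setOf_eq, Set.mem_univ, iff_true]
      exact ⟨fun i => i.elim0, fun i j _ => le_of_eq (congrArg u (Subsingleton.elim i j))⟩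
    show (∫ u in S 0 t, P α K u) = 1
    rw [hU, setIntegral_univ]
    have hP : ∀ u : Fin 0 → ℝ, P α K u = 1 := by
      intro u; unfold P; simp
    simp only [hP]
    rw [integral_const]
    have : (volume : Measure (Fin 0 → ℝ)) Set.univ = 1 := by
      simp [volume_pi, Measure.pi_univ]
    rw [Measure.real, this]
    simp
  | succ n ih =>
    intro t ht
    rw [dysonTerm_succ α K hcont n ht]
    show _ = ∫ s in (0:ℝ)..t, T α K n s * α s K
    apply intervalIntegral.integral_congr
    intro s hs
    rw [Set.uIcc_of_le ht] at hs
    show dysonTerm α K n s * α s K = T α K n s * α s K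
    rw [ih hs.1]

/-- The globally defined Dyson series. -/
def U (t : ℝ) : A := 1 + ∑' n : ℕ, Complex.I ^ (n + 1) • T α K (n+1) t

lemma T_succ_zero (n : ℕ) : T α K (n+1) 0 = 0 := intervalIntegral.integral_same

lemma U_zero : U α K 0 = 1 := by
  have h : ∀ n : ℕ, Complex.I ^ (n+1) • T α K (n+1) (0:ℝ) = 0 := by
    intro n; rw [T_succ_zero, smul_zero]
  unfold U
  rw [tsum_congr h, tsum_zero, add_zero]

include hcont in
lemma dysonU_eq {t : ℝ} (ht : 0 ≤ t) : dysonU α K t = U α K t := by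
  unfold dysonU U
  congr 1
  exact tsum_congr fun n => by rw [dysonTerm_eq α K hcont (n+1) ht]

include hiso hcont in
lemma summable_U_terms (t : ℝ) :
    Summable fun n : ℕ => Complex.I ^ (n+1) • T α K (n+1) t := by
  refine Summable.of_norm_bounded
    ((Real.summable_pow_div_factorial (|t| * ‖K‖)).comp_injective Nat.succ_injective)
    fun n => ?_
  rw [norm_smul, norm_pow, Complex.norm_I, one_pow, one_mul]
  exact T_succ_norm_le α K hcont hiso n t

include hiso hcont in
lemma summable_smul_T (t : ℝ) : Summable fun n : ℕ => Complex.I ^ (n+1) • T α K n t := by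
  rw [← summable_nat_add_iff 1]
  refine Summable.of_norm_bounded
    ((Real.summable_pow_div_factorial (|t| * ‖K‖)).comp_injective Nat.succ_injective)
    fun n => ?_
  rw [norm_smul, norm_pow, Complex.norm_I, one_pow, one_mul]
  exact T_succ_norm_le α K hcont hiso n t

include hiso hcont in
lemma tsum_smul_T_eq (t : ℝ) :
    (∑' n : ℕ, Complex.I ^ (n+1) • T α K n t) = Complex.I • U α K t := by
  have hsum := summable_smul_T α K hcont hiso t
  have hsum' := summable_U_terms α K hcont hiso t
  rw [hsum.tsum_eq_zero_add]
  have h1 : ∀ n : ℕ, Complex.I ^ (n+1+1) • T α K (n+1) t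
      = Complex.I • (Complex.I ^ (n+1) • T α K (n+1) t) := by
    intro n; rw [pow_succ', mul_smul]
  rw [tsum_congr h1, hsum'.tsum_const_smul _]
  show Complex.I ^ (0+1) • T α K 0 t + _ = _
  unfold U
  rw [zero_add, pow_one, smul_add]
  show Complex.I • (1:A) + _ = _
  rfl

include hiso hcont in
lemma tsum_deriv_eq (t : ℝ) :
    (∑' n : ℕ, Complex.I ^ (n+1) • (T α K n t * α t K))
      = Complex.I • (U α K t * α t K) := by
  have hsum := summable_smul_T α K hcont hiso t
  calc (∑' n : ℕ, Complex.I ^ (n+1) • (T α K n t * α t K))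
      = ∑' n : ℕ, (Complex.I ^ (n+1) • T α K n t) * α t K :=
        tsum_congr fun n => (smul_mul_assoc _ _ _).symm
    _ = (∑' n : ℕ, Complex.I ^ (n+1) • T α K n t) * α t K := hsum.tsum_mul_right _
    _ = (Complex.I • U α K t) * α t K := by rw [tsum_smul_T_eq α K hcont hiso]
    _ = Complex.I • (U α K t * α t K) := smul_mul_assoc _ _ _

include hiso hcont in
lemma U_hasDerivAt (t : ℝ) :
    HasDerivAt (U α K) (Complex.I • (U α K t * α t K)) t := by
  set R : ℝ := |t| + 1 with hR
  have hRpos : 0 < R := by positivity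
  have htR : t ∈ Set.Ioo (-R) R :=
    ⟨by cases abs_cases t with | inl h => simp [hR]; linarith [h.2] | inr h => simp [hR]; linarith [h.2],
     by have := le_abs_self t; simp [hR]; linarith⟩
  have hu : Summable (fun n : ℕ => (R * ‖K‖) ^ n / n.factorial * ‖K‖) :=
    (Real.summable_pow_div_factorial (R * ‖K‖)).mul_right ‖K‖
  have hbound : ∀ (n : ℕ) (y : ℝ), y ∈ Set.Ioo (-R) R →
      ‖Complex.I ^ (n+1) • (T α K n y * α y K)‖ ≤ (R * ‖K‖) ^ n / n.factorial * ‖K‖ := by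
    intro n y hy
    rw [norm_smul, norm_pow, Complex.norm_I, one_pow, one_mul]
    refine (Tmul_norm_le α K hcont hiso n y).trans ?_
    have hyR : |y| ≤ R := (abs_lt.mpr ⟨hy.1, hy.2⟩).le
    gcongr
  have hder : ∀ (n : ℕ) (y : ℝ), y ∈ Set.Ioo (-R) R →
      HasDerivAt (fun z => Complex.I ^ (n+1) • T α K (n+1) z)
        (Complex.I ^ (n+1) • (T α K n y * α y K)) y :=
    fun n y _ => (T_hasDerivAt α K hcont n y).fun_const_smul _
  have h0 : Summable fun n : ℕ => Complex.I ^ (n+1) • T α K (n+1) (0:ℝ) := by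
    have : ∀ n : ℕ, Complex.I ^ (n+1) • T α K (n+1) (0:ℝ) = 0 := by
      intro n; rw [T_succ_zero, smul_zero]
    simpa [this] using summable_zero
  have h0mem : (0:ℝ) ∈ Set.Ioo (-R) R := ⟨by linarith, hRpos⟩
  have key := hasDerivAt_tsum_of_isPreconnected hu isOpen_Ioo
    (convex_Ioo (-R) R).isPreconnected hder hbound h0mem h0 htR
  have hU : HasDerivAt (U α K)
      (∑' n : ℕ, Complex.I ^ (n+1) • (T α K n t * α t K)) t := by
    unfold U
    simpa using (hasDerivAt_const t (1:A)).fun_add key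
  rwa [tsum_deriv_eq α K hcont hiso] at hU

include hiso hcont in
lemma U_continuous : Continuous (U α K) :=
  continuous_iff_continuousAt.mpr fun x => (U_hasDerivAt α K hcont hiso x).continuousAt

include hiso hcont in
lemma U_cocycle (hα : ∀ t s : ℝ, α (t + s) = (α s).trans (α t))
    {t s : ℝ} (ht : 0 ≤ t) (hs : 0 ≤ s) :
    U α K (t + s) = U α K t * α t (U α K s) := by
  have hisoT : Isometry ((α t).toLinearMap : A →ₗ[ℂ] A) :=
    AddMonoidHomClass.isometry_of_norm _ (hiso t)
  set L : A →L[ℂ] A := ⟨(α t).toLinearMap, hisoT.continuous⟩ with hL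
  have hLa : ∀ x : A, L x = α t x := fun x => rfl
  -- the two solutions
  set f : ℝ → A := fun r => U α K (t + r) with hf
  set g : ℝ → A := fun r => U α K t * L (U α K r) with hg
  set v : ℝ → A → A := fun r y => Complex.I • (y * α (t + r) K) with hv
  have hαadd : ∀ r : ℝ, α (t + r) K = α t (α r K) := by
    intro r; rw [hα t r, AlgEquiv.trans_apply]
  have hlip : ∀ r : ℝ, LipschitzOnWith ‖K‖₊ (v r) Set.univ := by
    intro r
    refine LipschitzWith.lipschitzOnWith ?_
    apply LipschitzWith.of_dist_le_mul
    intro y₁ y₂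
    rw [dist_eq_norm, dist_eq_norm]
    have hdiff : v r y₁ - v r y₂ = Complex.I • ((y₁ - y₂) * α (t + r) K) := by
      simp only [hv, ← smul_sub, ← sub_mul]
    rw [hdiff, norm_smul, Complex.norm_I, one_mul]
    calc ‖(y₁ - y₂) * α (t + r) K‖ ≤ ‖y₁ - y₂‖ * ‖α (t + r) K‖ := norm_mul_le _ _
      _ = ‖K‖₊ * ‖y₁ - y₂‖ := by rw [hiso, coe_nnnorm]; ring
  have hUc : Continuous (U α K) := U_continuous α K hcont hiso
  have hfc : ContinuousOn f (Set.Icc 0 s) :=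
    (hUc.comp (continuous_const.add continuous_id)).continuousOn
  have hgc : ContinuousOn g (Set.Icc 0 s) :=
    (continuous_const.mul (L.continuous.comp hUc)).continuousOn
  have hf' : ∀ r ∈ Set.Ico 0 s, HasDerivWithinAt f (v r (f r)) (Set.Ici r) r := by
    intro r _
    have h1 : HasDerivAt (fun x : ℝ => t + x) 1 r := (hasDerivAt_id r).const_add t
    have h2 := (U_hasDerivAt α K hcont hiso (t + r)).scomp r h1
    rw [one_smul] at h2
    exact h2.hasDerivWithinAt
  have hg' : ∀ r ∈ Set.Ico 0 s, HasDerivWithinAt g (v r (g r)) (Set.Ici r) r := by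
    intro r _
    have h1 := ((L.restrictScalars ℝ).hasFDerivAt (x := U α K r)).comp_hasDerivAt r
      (U_hasDerivAt α K hcont hiso r)
    have h2 : HasDerivAt (fun x => U α K t * L (U α K x))
        (U α K t * L (Complex.I • (U α K r * α r K))) r :=
      h1.const_mul (U α K t)
    have h3 : U α K t * L (Complex.I • (U α K r * α r K)) = v r (g r) := by
      rw [_root_.map_smul]
      rw [hLa, map_mul]
      rw [← hLa (U α K r)]
      show _ = Complex.I • (U α K t * L (U α K r) * α (t + r) K)
      rw [hαadd r, mul_smul_comm, mul_assoc]
    rw [h3] at h2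
    exact h2.hasDerivWithinAt
  have hinit : f 0 = g 0 := by
    simp only [hf, hg, add_zero, U_zero, hLa, map_one, mul_one]
  have := ODE_solution_unique_of_mem_Icc_right (fun r _ => hlip r) hfc hf'
    (fun r _ => Set.mem_univ _) hgc hg' (fun r _ => Set.mem_univ _) hinit
  have hfinal := this (Set.right_mem_Icc.mpr hs)
  simpa only [hf, hg, hLa] using hfinal

end basic

end Dyson14

theorem stmt14 {A : Type*} [NormedRing A] [NormedAlgebra ℂ A] [CompleteSpace A]
    (α : ℝ → A ≃ₐ[ℂ] A)
    -- `α` is a group homomorphism `ℝ → Aut(A)` …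
    (hα : ∀ t s : ℝ, α (t + s) = (α s).trans (α t))
    -- … by isometries …
    (hiso : ∀ (t : ℝ) (a : A), ‖α t a‖ = ‖a‖)
    -- … which is strongly continuous
    (hcont : ∀ a : A, Continuous fun t : ℝ => α t a)
    (K : A) :
    -- (i) absolute convergence, with the factorial bound on the `n`-th term
    (∀ t : ℝ, 0 ≤ t →
      (∀ n : ℕ, 1 ≤ n → ‖dysonTerm α K n t‖ ≤ (t * ‖K‖) ^ n / n.factorial) ∧
      Summable fun n : ℕ => ‖Complex.I ^ (n + 1) • dysonTerm α K (n + 1) t‖) ∧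
    -- (ii) `U(0) = 1` and `(1/i)·(d/dt)U(t) = U(t)·α_t(K)` on `[0, ∞)`
    (dysonU α K 0 = 1 ∧
      ∀ t : ℝ, 0 ≤ t →
        HasDerivWithinAt (dysonU α K)
          (Complex.I • (dysonU α K t * α t K)) (Set.Ici 0) t) ∧
    -- (iii) the co-cycle condition
    (∀ t s : ℝ, 0 ≤ t → 0 ≤ s →
      dysonU α K (t + s) = dysonU α K t * α t (dysonU α K s)) := by
  refine ⟨?_, ⟨?_, ?_⟩, ?_⟩
  · intro t ht
    have hbound : ∀ n : ℕ, ‖dysonTerm α K (n+1) t‖ ≤ (t * ‖K‖) ^ (n+1) / (n+1).factorial := by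
      intro n
      rw [Dyson14.dysonTerm_eq α K hcont (n+1) ht]
      have := Dyson14.T_succ_norm_le α K hcont hiso n t
      rwa [abs_of_nonneg ht] at this
    constructor
    · intro n hn
      obtain ⟨m, rfl⟩ := Nat.exists_eq_add_of_le hn
      simpa [add_comm] using hbound m
    · refine Summable.of_nonneg_of_le (fun n => norm_nonneg _) (fun n => ?_)
        ((Real.summable_pow_div_factorial (t * ‖K‖)).comp_injective Nat.succ_injective)
      rw [norm_smul, norm_pow, Complex.norm_I, one_pow, one_mul]
      exact hbound n
  · rw [Dyson14.dysonU_eq α K hcont le_rfl, Dyson14.U_zero]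
  · intro t ht
    have h := (Dyson14.U_hasDerivAt α K hcont hiso t).hasDerivWithinAt (s := Set.Ici 0)
    have h2 := h.congr (fun y hy => Dyson14.dysonU_eq α K hcont hy)
      (Dyson14.dysonU_eq α K hcont ht)
    rwa [Dyson14.dysonU_eq α K hcont ht]
  · intro t s ht hs
    rw [Dyson14.dysonU_eq α K hcont (by linarith : (0:ℝ) ≤ t + s),
      Dyson14.dysonU_eq α K hcont ht, Dyson14.dysonU_eq α K hcont hs]
    exact Dyson14.U_cocycle α K hcont hiso hα ht hs


end
end

section
/- Let m > 0 and a > 0. Then there exists a constant C > 0 such that for all s ≥ a: ∫_{ℝ³} e^{−s·√(‖k‖² + m²)} / (2·√(‖k‖² + m²)) dk ≤ C · e^{−s m}. In particular the integral is finite for every s > 0 and decays exponentially with rate m as s → ∞. -/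
/-!
STATEMENT 15: the massive momentum-space integral
`∫_{ℝ³} e^{−s√(‖k‖² + m²)} / (2√(‖k‖² + m²)) dk`
is finite for every `s > 0` and satisfies `≤ C e^{−sm}` uniformly for `s ≥ a`.
-/

noncomputable section

open MeasureTheory

lemma stmt15_aux_omega_ge (m : ℝ) (hm : 0 < m) (k : E3) :
    m ≤ Real.sqrt (‖k‖ ^ 2 + m ^ 2) ∧ ‖k‖ ≤ Real.sqrt (‖k‖ ^ 2 + m ^ 2) := by
  constructor
  · rw [show m = Real.sqrt (m ^ 2) from (Real.sqrt_sq hm.le).symm]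
    exact Real.sqrt_le_sqrt (by nlinarith [Real.sq_sqrt (sq_nonneg m), sq_nonneg ‖k‖])
  · rw [show ‖k‖ = Real.sqrt (‖k‖ ^ 2) from (Real.sqrt_sq (norm_nonneg k)).symm]
    exact Real.sqrt_le_sqrt (by nlinarith [Real.sq_sqrt (sq_nonneg ‖k‖)])

lemma stmt15_aux_int (m : ℝ) (hm : 0 < m) (s : ℝ) (hs : 0 < s) :
    Integrable (fun k : E3 =>
      Real.exp (-s * Real.sqrt (‖k‖ ^ 2 + m ^ 2)) /
        (2 * Real.sqrt (‖k‖ ^ 2 + m ^ 2))) := by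
  set M : ℝ := max 1 (4 / s) with hM
  have hM1 : (1 : ℝ) ≤ M := le_max_left _ _
  have hMs : 1 ≤ M * s / 4 := by
    rw [le_div_iff₀ (by norm_num)]
    calc (1 : ℝ) * 4 = (4 / s) * s := by field_simp
    _ ≤ M * s := mul_le_mul_of_nonneg_right (le_max_right _ _) hs.le
  have hcont : Continuous (fun k : E3 =>
      Real.exp (-s * Real.sqrt (‖k‖ ^ 2 + m ^ 2)) /
        (2 * Real.sqrt (‖k‖ ^ 2 + m ^ 2))) := by
    have hω : Continuous fun k : E3 => Real.sqrt (‖k‖ ^ 2 + m ^ 2) :=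
      ((continuous_norm.pow 2).add continuous_const).sqrt
    refine Continuous.div ((continuous_const.mul hω).rexp) (continuous_const.mul hω) fun k => ?_
    have := (stmt15_aux_omega_ge m hm k).1
    positivity
  have hint : Integrable (fun k : E3 => (M ^ 4 / (2 * m)) * (1 + ‖k‖) ^ (-(4 : ℝ))) := by
    refine Integrable.const_mul ?_ _
    apply integrable_one_add_norm (E := E3)
    simp [finrank_euclideanSpace]
    norm_num
  refine hint.mono' hcont.aestronglyMeasurable ?_
  refine Filter.Eventually.of_forall fun k => ?_
  have hk0 : (0 : ℝ) ≤ ‖k‖ := norm_nonneg k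
  obtain ⟨hω1, hω2⟩ := stmt15_aux_omega_ge m hm k
  have hωpos : 0 < Real.sqrt (‖k‖ ^ 2 + m ^ 2) := lt_of_lt_of_le hm hω1
  set t := ‖k‖
  set ω := Real.sqrt (‖k‖ ^ 2 + m ^ 2)
  have hpow : (0 : ℝ) < (1 + t) ^ 4 := by positivity
  have h1 : 1 + t ≤ M * Real.exp (s * t / 4) := by
    have e1 : 1 + s * t / 4 ≤ Real.exp (s * t / 4) := by
      have := Real.add_one_le_exp (s * t / 4); linarith
    have e2 : 1 + t ≤ M * (1 + s * t / 4) := by nlinarith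
    calc 1 + t ≤ M * (1 + s * t / 4) := e2
    _ ≤ M * Real.exp (s * t / 4) := mul_le_mul_of_nonneg_left e1 (by linarith)
  have hkey : (1 + t) ^ 4 ≤ M ^ 4 * Real.exp (s * t) := by
    have h2 := pow_le_pow_left₀ (by linarith : (0:ℝ) ≤ 1 + t) h1 4
    rw [mul_pow, ← Real.exp_nat_mul] at h2
    have h3 : ((4 : ℕ) : ℝ) * (s * t / 4) = s * t := by push_cast; ring
    rwa [h3] at h2
  have hnn : 0 ≤ Real.exp (-s * ω) / (2 * ω) := by positivity
  rw [Real.norm_of_nonneg hnn]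
  have hr : (1 + t) ^ (-(4 : ℝ)) = ((1 + t) ^ 4)⁻¹ := by
    rw [Real.rpow_neg (by linarith), ← Real.rpow_natCast (1 + t) 4]
    norm_num
  rw [hr]
  have hstep2 : Real.exp (-s * t) ≤ M ^ 4 * ((1 + t) ^ 4)⁻¹ := by
    rw [show -s * t = -(s * t) by ring, Real.exp_neg, ← one_div, ← div_eq_mul_inv,
      div_le_div_iff₀ (Real.exp_pos _) hpow]
    nlinarith [hkey]
  calc Real.exp (-s * ω) / (2 * ω)
      ≤ Real.exp (-s * t) / (2 * m) := by
        apply div_le_div₀ (Real.exp_pos _).le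
          (Real.exp_le_exp.mpr (by nlinarith)) (by linarith) (by linarith)
    _ ≤ (M ^ 4 * ((1 + t) ^ 4)⁻¹) / (2 * m) := by gcongr
    _ = M ^ 4 / (2 * m) * ((1 + t) ^ 4)⁻¹ := by ring

theorem stmt15 (m a : ℝ) (hm : 0 < m) (ha : 0 < a) :
    (∃ C : ℝ, 0 < C ∧ ∀ s : ℝ, a ≤ s →
      ∫ k : E3, Real.exp (-s * Real.sqrt (‖k‖ ^ 2 + m ^ 2)) /
          (2 * Real.sqrt (‖k‖ ^ 2 + m ^ 2)) ≤
        C * Real.exp (-s * m)) ∧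
    ∀ s : ℝ, 0 < s →
      Integrable (fun k : E3 =>
        Real.exp (-s * Real.sqrt (‖k‖ ^ 2 + m ^ 2)) /
          (2 * Real.sqrt (‖k‖ ^ 2 + m ^ 2))) := by
  have hIa := stmt15_aux_int m hm a ha
  set Ia : ℝ := ∫ k : E3, Real.exp (-a * Real.sqrt (‖k‖ ^ 2 + m ^ 2)) /
      (2 * Real.sqrt (‖k‖ ^ 2 + m ^ 2)) with hIadef
  have hIa0 : 0 ≤ Ia := integral_nonneg fun k => by positivity
  refine ⟨⟨Real.exp (a * m) * Ia + 1, by positivity, fun s hs => ?_⟩,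
    fun s hs => stmt15_aux_int m hm s hs⟩
  have hbound : ∫ k : E3, Real.exp (-s * Real.sqrt (‖k‖ ^ 2 + m ^ 2)) /
      (2 * Real.sqrt (‖k‖ ^ 2 + m ^ 2)) ≤
      (Real.exp (a * m) * Real.exp (-s * m)) * Ia := by
    rw [hIadef, ← integral_const_mul]
    refine integral_mono_of_nonneg (Filter.Eventually.of_forall fun k => by positivity)
      (hIa.const_mul _) (Filter.Eventually.of_forall fun k => ?_)
    obtain ⟨hω1, hω2⟩ := stmt15_aux_omega_ge m hm k
    have hωpos : 0 < Real.sqrt (‖k‖ ^ 2 + m ^ 2) := lt_of_lt_of_le hm hω1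
    set ω := Real.sqrt (‖k‖ ^ 2 + m ^ 2)
    have hexp : Real.exp (-s * ω) ≤
        Real.exp (a * m) * Real.exp (-s * m) * Real.exp (-a * ω) := by
      rw [← Real.exp_add, ← Real.exp_add]
      refine Real.exp_le_exp.mpr ?_
      nlinarith [mul_nonneg (sub_nonneg.mpr hs) (sub_nonneg.mpr hω1)]
    dsimp only
    rw [← mul_div_assoc]
    apply div_le_div_of_nonneg_right hexp (by linarith) |>.trans_eq rfl
  refine hbound.trans ?_
  have hexps : 0 < Real.exp (-s * m) := Real.exp_pos _
  nlinarith [hexps]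

end
end

section
/- Let n ≥ 1 and let E be the set of unordered pairs {i, j} of distinct elements of {1, …, n}. In the ring of multivariate formal power series over ℚ in the variables (X_e)_{e ∈ E}, the following identity holds: ∏_{e ∈ E} exp(X_e) = ∑_{P} ∏_{B ∈ P} C_B, where the sum is over all set partitions P of {1, …, n}, and for a block B ⊆ {1, …, n} one defines C_B := ∑_{l} ∏_{e ∈ E_B} X_e^{l(e)} / l(e)!, the sum being over all functions l : E_B → ℕ (E_B the unordered pairs of distinct elements of B) such that the simple graph on B with edge set {e ∈ E_B : l(e) ≥ 1} is connected (for |B| = 1 the only term is l = 0 and C_B = 1). -/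
/-!
STATEMENT 16: the connected-graph decomposition of the exponential of pairwise
contractions, in the ring `MvPowerSeries` over `ℚ` with variables `X_e` indexed by the
unordered pairs `e = {i, j}` of distinct elements of `{1, …, n}` (here `Fin n`):

`∏_e exp(X_e) = ∑_P ∏_{B ∈ P} C_B`,

the sum being over all set partitions `P` of `Fin n`.

An element of `MvPowerSeries σ ℚ` is by definition a function `(σ →₀ ℕ) → ℚ`
assigning to each monomial (exponent function `d`) its coefficient; the formal sums
`exp(X_e) = ∑_m X_e^m/m!` and `C_B = ∑_l ∏_{e ∈ E_B} X_e^{l(e)}/l(e)!` (over `l` whose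
graph on `B` is connected) are encoded coefficientwise: distinct indices `m`
(resp. `l`) contribute distinct monomials, so the coefficient of the monomial `d`
in `C_B` is `∏_e 1/d(e)!` if `supp d ⊆ E_B` and the graph on `B` with edge set
`{e : d e ≥ 1}` is connected (which for `|B| = 1` forces `d = 0` with coefficient 1),
and `0` otherwise.
-/

noncomputable section

open Classical

/-- Unordered pairs of distinct elements of `Fin n`: the index set `E` of the
variables `X_e`. -/
abbrev EdgeIdx (n : ℕ) := {e : Sym2 (Fin n) // ¬ e.IsDiag}

/-- The edge `e` has both endpoints in the block `B` (i.e. `e ∈ E_B`). -/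
def edgeInBlock {n : ℕ} (B : Finset (Fin n)) (e : EdgeIdx n) : Prop :=
  ∀ i ∈ (e : Sym2 (Fin n)), i ∈ B

/-- The simple graph on the block `B` whose edges are the pairs `e ⊆ B` with
multiplicity `d e ≥ 1`. -/
def graphOf {n : ℕ} (B : Finset (Fin n)) (d : EdgeIdx n →₀ ℕ) : SimpleGraph (Fin n) where
  Adj i j := i ≠ j ∧ i ∈ B ∧ j ∈ B ∧ ∃ e : EdgeIdx n, (e : Sym2 (Fin n)) = s(i, j) ∧ 1 ≤ d e
  symm := ⟨by
    rintro i j ⟨hne, hi, hj, e, he, hd⟩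
    exact ⟨hne.symm, hj, hi, e, by rw [he, Sym2.eq_swap], hd⟩⟩
  loopless := ⟨by rintro i ⟨hne, -⟩; exact hne rfl⟩

/-- The formal exponential `exp(X_e) = ∑_{m ≥ 0} X_e^m / m!`, encoded
coefficientwise. -/
def expX (n : ℕ) (e : EdgeIdx n) : MvPowerSeries (EdgeIdx n) ℚ :=
  fun d : EdgeIdx n →₀ ℕ =>
    if d.support ⊆ {e} then (1 : ℚ) / (d e).factorial else 0

/-- The connected contribution
`C_B = ∑_l ∏_{e ∈ E_B} X_e^{l(e)} / l(e)!`, the sum over those `l : E_B → ℕ` for which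
the simple graph on `B` with edge set `{e : l(e) ≥ 1}` is connected, encoded
coefficientwise (for `|B| = 1` the only term is `l = 0` and `C_B = 1`). -/
def connTerm (n : ℕ) (B : Finset (Fin n)) : MvPowerSeries (EdgeIdx n) ℚ :=
  fun d : EdgeIdx n →₀ ℕ =>
    if (∀ e ∈ d.support, edgeInBlock B e) ∧
        (∀ i ∈ B, ∀ j ∈ B, (graphOf B d).Reachable i j) then
      ∏ e ∈ d.support, (1 : ℚ) / (d e).factorial
    else 0

/-- `P` is a set partition of `Fin n` (a family of pairwise disjoint nonempty blocks
covering everything: every point lies in exactly one block). -/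
def IsPartition {n : ℕ} (P : Finset (Finset (Fin n))) : Prop :=
  (∀ B ∈ P, B.Nonempty) ∧ ∀ i : Fin n, ∃! B, B ∈ P ∧ i ∈ B

namespace Stmt16Aux


variable {n : ℕ}

open Finset MvPowerSeries

/-- coeff is evaluation, definitionally. -/
lemma coeff_apply (f : MvPowerSeries (EdgeIdx n) ℚ) (d : EdgeIdx n →₀ ℕ) :
    MvPowerSeries.coeff d f = f d := rfl

abbrev G (d : EdgeIdx n →₀ ℕ) : SimpleGraph (Fin n) := graphOf Finset.univ d

def comp (d : EdgeIdx n →₀ ℕ) (i : Fin n) : Finset (Fin n) :=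
  Finset.univ.filter fun j => (G d).Reachable i j

def parts (d : EdgeIdx n →₀ ℕ) : Finset (Finset (Fin n)) :=
  Finset.univ.image (comp d)

lemma mem_comp {d : EdgeIdx n →₀ ℕ} {i j : Fin n} : j ∈ comp d i ↔ (G d).Reachable i j := by
  simp [comp]

lemma comp_eq_of_mem {d : EdgeIdx n →₀ ℕ} {i j : Fin n} (h : i ∈ comp d j) :
    comp d j = comp d i := by
  rw [mem_comp] at h
  ext k
  rw [mem_comp, mem_comp]
  exact ⟨fun hk => h.symm.trans hk, fun hk => h.trans hk⟩

lemma edge_rep (e : EdgeIdx n) : ∃ a b : Fin n, a ≠ b ∧ (e : Sym2 (Fin n)) = s(a, b) := by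
  obtain ⟨a, b, hab⟩ : ∃ a b, (e : Sym2 (Fin n)) = s(a, b) := by
    induction (e : Sym2 (Fin n)) using Sym2.ind with
    | _ a b => exact ⟨a, b, rfl⟩
  refine ⟨a, b, ?_, hab⟩
  intro h
  exact e.prop (by rw [hab]; exact (Sym2.mk_isDiag_iff).2 h)

lemma edgeInBlock_iff {B : Finset (Fin n)} {e : EdgeIdx n} {a b : Fin n}
    (hab : (e : Sym2 (Fin n)) = s(a, b)) : edgeInBlock B e ↔ a ∈ B ∧ b ∈ B := by
  unfold edgeInBlock
  rw [hab]
  constructor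
  · intro h
    exact ⟨h a (Sym2.mem_mk_left a b), h b (Sym2.mem_mk_right a b)⟩
  · rintro ⟨ha, hb⟩ i hi
    rcases Sym2.mem_iff.1 hi with rfl | rfl
    · exact ha
    · exact hb

lemma adj_of_edge {d : EdgeIdx n →₀ ℕ} {e : EdgeIdx n} {a b : Fin n} (hne : a ≠ b)
    (hab : (e : Sym2 (Fin n)) = s(a, b)) (hd : 1 ≤ d e) : (G d).Adj a b :=
  ⟨hne, Finset.mem_univ a, Finset.mem_univ b, e, hab, hd⟩

/-- key walk transfer lemma -/
lemma walk_lemma {d : EdgeIdx n →₀ ℕ} {B : Finset (Fin n)}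
    (hB : ∀ x y, x ∈ B → (G d).Adj x y → y ∈ B) {a c : Fin n} (w : (G d).Walk a c)
    (ha : a ∈ B) : c ∈ B ∧ (graphOf B d).Reachable a c := by
  induction w with
  | nil => exact ⟨ha, SimpleGraph.Reachable.refl _⟩
  | @cons u v z h p ih =>
    have hv : v ∈ B := hB u v ha h
    obtain ⟨hz, hr⟩ := ih hv
    refine ⟨hz, SimpleGraph.Reachable.trans ?_ hr⟩
    exact SimpleGraph.Adj.reachable ⟨h.1, ha, hv, h.2.2.2⟩

lemma comp_closed {d : EdgeIdx n →₀ ℕ} {i : Fin n} :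
    ∀ x y, x ∈ comp d i → (G d).Adj x y → y ∈ comp d i := by
  intro x y hx hadj
  rw [mem_comp] at *
  exact hx.trans hadj.reachable

lemma isPartition_parts (d : EdgeIdx n →₀ ℕ) : IsPartition (parts d) := by
  constructor
  · rintro B hB
    obtain ⟨i, -, rfl⟩ := Finset.mem_image.1 hB
    exact ⟨i, mem_comp.2 (SimpleGraph.Reachable.refl _)⟩
  · intro i
    refine ⟨comp d i, ⟨Finset.mem_image.2 ⟨i, Finset.mem_univ i, rfl⟩,
      mem_comp.2 (SimpleGraph.Reachable.refl _)⟩, ?_⟩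
    rintro B ⟨hB, hiB⟩
    obtain ⟨j, -, rfl⟩ := Finset.mem_image.1 hB
    exact (comp_eq_of_mem hiB)





lemma single_of_supp_subset {l : EdgeIdx n →₀ ℕ} {e : EdgeIdx n}
    (h : l.support ⊆ {e}) : l = Finsupp.single e (l e) := by
  ext e'
  by_cases he : e' = e
  · subst he; simp
  · rw [Finsupp.single_apply, if_neg (Ne.symm he)]
    by_contra h0
    exact he (Finset.mem_singleton.1 (h (Finsupp.mem_support_iff.2 h0)))

lemma coeff_lhs (d : EdgeIdx n →₀ ℕ) :
    MvPowerSeries.coeff d (∏ e : EdgeIdx n, expX n e) =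
      ∏ e : EdgeIdx n, (1 : ℚ) / (d e).factorial := by
  rw [MvPowerSeries.coeff_prod]
  have h0 : ∀ e : EdgeIdx n, (fun e' => Finsupp.single e' (d e')) e ≠ 0 → e ∈ d.support := by
    intro e he
    simp only [ne_eq, Finsupp.single_eq_zero] at he
    exact Finsupp.mem_support_iff.2 he
  set l₀ : EdgeIdx n →₀ (EdgeIdx n →₀ ℕ) :=
    Finsupp.onFinset d.support (fun e => Finsupp.single e (d e)) h0 with hl₀
  have hl₀app : ∀ e, l₀ e = Finsupp.single e (d e) := fun e => rfl
  have hmem : l₀ ∈ Finset.finsuppAntidiag Finset.univ d := by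
    rw [Finset.mem_finsuppAntidiag]
    refine ⟨?_, fun e _ => Finset.mem_univ e⟩
    ext e'
    rw [Finset.sum_apply']
    rw [Finset.sum_eq_single e' (fun e _ he => by
      rw [hl₀app, Finsupp.single_apply, if_neg he]) (fun h => absurd (Finset.mem_univ e') h)]
    rw [hl₀app, Finsupp.single_apply, if_pos rfl]
  rw [Finset.sum_eq_single_of_mem l₀ hmem]
  · apply Finset.prod_congr rfl
    intro e _
    rw [coeff_apply, expX, hl₀app]
    rw [if_pos (Finsupp.support_single_subset), Finsupp.single_apply, if_pos rfl]
  · intro l hl hne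
    by_cases hsupp : ∀ e : EdgeIdx n, (l e).support ⊆ {e}
    · exfalso
      apply hne
      rw [Finset.mem_finsuppAntidiag] at hl
      ext e e'
      rw [hl₀app]
      have hle : l e = Finsupp.single e (l e e) := single_of_supp_subset (hsupp e)
      have : d e = l e e := by
        rw [← hl.1, Finset.sum_apply']
        rw [Finset.sum_eq_single e (fun b _ hbe => by
          rw [single_of_supp_subset (hsupp b), Finsupp.single_apply, if_neg hbe])
          (fun h => absurd (Finset.mem_univ e) h)]
      rw [hle, this]
    · push_neg at hsupp
      obtain ⟨e, he⟩ := hsupp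
      exact Finset.prod_eq_zero (Finset.mem_univ e) (by rw [coeff_apply, expX, if_neg he])





lemma connTerm_cond {B : Finset (Fin n)} {m : EdgeIdx n →₀ ℕ} (h : connTerm n B m ≠ 0) :
    (∀ e ∈ m.support, edgeInBlock B e) ∧
      (∀ i ∈ B, ∀ j ∈ B, (graphOf B m).Reachable i j) := by
  by_contra hc
  exact h (by rw [connTerm, if_neg hc])

lemma block_of_edge {d : EdgeIdx n →₀ ℕ} {e : EdgeIdx n} (hde : e ∈ d.support)
    {a b : Fin n} (hne : a ≠ b) (hab : (e : Sym2 (Fin n)) = s(a, b))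
    {B : Finset (Fin n)} (hB : B ∈ parts d) : edgeInBlock B e ↔ B = comp d a := by
  constructor
  · intro h
    obtain ⟨j, -, rfl⟩ := Finset.mem_image.1 hB
    exact comp_eq_of_mem (((edgeInBlock_iff hab).1 h).1)
  · rintro rfl
    rw [edgeInBlock_iff hab]
    refine ⟨mem_comp.2 (SimpleGraph.Reachable.refl _), mem_comp.2 ?_⟩
    exact (adj_of_edge hne hab (Finsupp.mem_support_iff.1 hde |> Nat.one_le_iff_ne_zero.2)).reachable

/-- a partition supporting a nonzero term must be the component partition -/
lemma partition_eq_parts {d : EdgeIdx n →₀ ℕ} {P : Finset (Finset (Fin n))}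
    (hP : IsPartition P) {l : Finset (Fin n) →₀ (EdgeIdx n →₀ ℕ)}
    (hl : l ∈ Finset.finsuppAntidiag P d)
    (hnz : ∀ B ∈ P, connTerm n B (l B) ≠ 0) : P = parts d := by
  rw [Finset.mem_finsuppAntidiag] at hl
  have hd : ∀ e, d e = ∑ B ∈ P, l B e := by
    intro e; rw [← hl.1, Finset.sum_apply']
  have hle : ∀ B ∈ P, ∀ e, l B e ≤ d e := by
    intro B hB e
    rw [hd e]
    exact Finset.single_le_sum (f := fun B => l B e) (fun _ _ => Nat.zero_le _) hB
  have huniq : ∀ x : Fin n, ∀ B ∈ P, ∀ B' ∈ P, x ∈ B → x ∈ B' → B = B' := by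
    intro x B hB B' hB' hx hx'
    obtain ⟨C, -, hC⟩ := hP.2 x
    rw [hC B ⟨hB, hx⟩, hC B' ⟨hB', hx'⟩]
  have hclosed : ∀ B ∈ P, ∀ x y, x ∈ B → (G d).Adj x y → y ∈ B := by
    intro B hB x y hx hadj
    obtain ⟨-, -, -, e, he, h1⟩ := hadj
    have h1' : ∃ B' ∈ P, 1 ≤ l B' e := by
      by_contra hc
      push_neg at hc
      have : d e = 0 := by
        rw [hd e]
        exact Finset.sum_eq_zero fun B' hB' => Nat.lt_one_iff.1 (hc B' hB')
      omega
    obtain ⟨B', hB', h1'⟩ := h1'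
    have heB' : edgeInBlock B' e :=
      (connTerm_cond (hnz B' hB')).1 e (Finsupp.mem_support_iff.2 (by omega))
    obtain ⟨hxB', hyB'⟩ := (edgeInBlock_iff he).1 heB'
    rw [huniq x B hB B' hB' hx hxB']
    exact hyB'
  have hblock : ∀ B ∈ P, ∀ i ∈ B, B = comp d i := by
    intro B hB i hi
    apply Finset.Subset.antisymm
    · intro j hj
      rw [mem_comp]
      have hreach := (connTerm_cond (hnz B hB)).2 i hi j hj
      refine hreach.mono ?_
      intro x y hxy
      exact ⟨hxy.1, Finset.mem_univ x, Finset.mem_univ y,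
        hxy.2.2.2.choose, hxy.2.2.2.choose_spec.1,
        le_trans hxy.2.2.2.choose_spec.2 (hle B hB _)⟩
    · intro j hj
      rw [mem_comp] at hj
      obtain ⟨w⟩ := hj
      exact (walk_lemma (hclosed B hB) w hi).1
  ext B
  constructor
  · intro hB
    obtain ⟨i, hi⟩ := hP.1 B hB
    rw [hblock B hB i hi]
    exact Finset.mem_image.2 ⟨i, Finset.mem_univ i, rfl⟩
  · intro hB
    obtain ⟨i, -, rfl⟩ := Finset.mem_image.1 hB
    obtain ⟨B', ⟨hB', hiB'⟩, -⟩ := hP.2 i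
    rw [← hblock B' hB' i hiB']
    exact hB'

/-- the canonical decomposition of `d` along the component partition -/
def m₀ (d : EdgeIdx n →₀ ℕ) : Finset (Fin n) →₀ (EdgeIdx n →₀ ℕ) :=
  Finsupp.onFinset (parts d)
    (fun B => if B ∈ parts d then Finsupp.filter (fun e => edgeInBlock B e) d else 0)
    (fun B h => by by_contra hc; exact h (if_neg hc))

lemma m₀_apply {d : EdgeIdx n →₀ ℕ} {B : Finset (Fin n)} (hB : B ∈ parts d) :
    m₀ d B = Finsupp.filter (fun e => edgeInBlock B e) d := if_pos hB

lemma m₀_apply_e {d : EdgeIdx n →₀ ℕ} {B : Finset (Fin n)} (hB : B ∈ parts d)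
    (e : EdgeIdx n) : m₀ d B e = if edgeInBlock B e then d e else 0 := by
  rw [m₀_apply hB, Finsupp.filter_apply]

lemma m₀_mem {d : EdgeIdx n →₀ ℕ} : m₀ d ∈ Finset.finsuppAntidiag (parts d) d := by
  rw [Finset.mem_finsuppAntidiag]
  refine ⟨?_, Finsupp.support_onFinset_subset⟩
  ext e
  rw [Finset.sum_apply']
  by_cases hde : e ∈ d.support
  · obtain ⟨a, b, hne, hab⟩ := edge_rep e
    have hca : comp d a ∈ parts d := Finset.mem_image.2 ⟨a, Finset.mem_univ a, rfl⟩
    rw [Finset.sum_eq_single_of_mem (comp d a) hca]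
    · rw [m₀_apply_e hca, if_pos ((block_of_edge hde hne hab hca).2 rfl)]
    · intro B hB hBne
      rw [m₀_apply_e hB, if_neg (fun h => hBne ((block_of_edge hde hne hab hB).1 h))]
  · have h0 : d e = 0 := by simpa using hde
    rw [h0]
    exact Finset.sum_eq_zero fun B hB => by rw [m₀_apply_e hB, h0]; exact ite_self 0

lemma graphOf_m₀ {d : EdgeIdx n →₀ ℕ} {B : Finset (Fin n)} (hB : B ∈ parts d) :
    graphOf B d ≤ graphOf B (m₀ d B) := by
  intro x y hxy
  obtain ⟨hne, hx, hy, e, he, h1⟩ := hxy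
  refine ⟨hne, hx, hy, e, he, ?_⟩
  rw [m₀_apply_e hB, if_pos ((edgeInBlock_iff he).2 ⟨hx, hy⟩)]
  exact h1

lemma connTerm_m₀ {d : EdgeIdx n →₀ ℕ} {B : Finset (Fin n)} (hB : B ∈ parts d) :
    connTerm n B (m₀ d B) = ∏ e ∈ d.support.filter (fun e => edgeInBlock B e),
      (1 : ℚ) / (d e).factorial := by
  obtain ⟨i, -, hBi⟩ := Finset.mem_image.1 hB
  have hsupp : (m₀ d B).support = d.support.filter (fun e => edgeInBlock B e) := by
    rw [m₀_apply hB, Finsupp.support_filter]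
  rw [connTerm, if_pos, hsupp]
  · apply Finset.prod_congr rfl
    intro e he
    rw [Finset.mem_filter] at he
    rw [m₀_apply_e hB, if_pos he.2]
  · constructor
    · intro e he
      rw [hsupp, Finset.mem_filter] at he
      exact he.2
    · intro x hx y hy
      subst hBi
      rw [mem_comp] at hx hy
      obtain ⟨w⟩ := hx.symm.trans hy
      exact ((walk_lemma comp_closed w (mem_comp.2 hx)).2).mono (graphOf_m₀ hB)

lemma filter_partition_support (d : EdgeIdx n →₀ ℕ) :
    d.support = (parts d).biUnion
      (fun B => d.support.filter (fun e => edgeInBlock B e)) := by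
  ext e
  simp only [Finset.mem_biUnion, Finset.mem_filter]
  constructor
  · intro hde
    obtain ⟨a, b, hne, hab⟩ := edge_rep e
    have hca : comp d a ∈ parts d := Finset.mem_image.2 ⟨a, Finset.mem_univ a, rfl⟩
    exact ⟨comp d a, hca, hde, (block_of_edge hde hne hab hca).2 rfl⟩
  · rintro ⟨B, -, hde, -⟩
    exact hde

lemma coeff_rhs (d : EdgeIdx n →₀ ℕ) :
    MvPowerSeries.coeff d (∏ B ∈ parts d, connTerm n B) =
      ∏ e : EdgeIdx n, (1 : ℚ) / (d e).factorial := by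
  rw [MvPowerSeries.coeff_prod]
  rw [Finset.sum_eq_single_of_mem (m₀ d) m₀_mem]
  · have : ∀ B ∈ parts d, MvPowerSeries.coeff (m₀ d B) (connTerm n B)
        = ∏ e ∈ d.support.filter (fun e => edgeInBlock B e), (1 : ℚ) / (d e).factorial :=
      fun B hB => connTerm_m₀ hB
    rw [Finset.prod_congr rfl this]
    rw [← Finset.prod_biUnion, ← filter_partition_support d]
    · rw [← Finset.prod_subset (Finset.subset_univ d.support)]
      intro e _ he
      rw [Finsupp.notMem_support_iff.1 he]
      norm_num
    · intro B hB B' hB' hne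
      simp only [Function.onFun]
      rw [Finset.disjoint_left]
      intro e he he'
      rw [Finset.mem_filter] at he he'
      obtain ⟨a, b, hab, hrep⟩ := edge_rep e
      exact hne (((block_of_edge he.1 hab hrep hB).1 he.2).trans
        ((block_of_edge he'.1 hab hrep hB').1 he'.2).symm)
  · intro l hl hlne
    by_contra hprod
    apply hlne
    rw [Finset.mem_finsuppAntidiag] at hl
    have hnz : ∀ B ∈ parts d, connTerm n B (l B) ≠ 0 := by
      intro B hB h0
      exact hprod (Finset.prod_eq_zero hB h0)
    have hd : ∀ e, d e = ∑ B ∈ parts d, l B e := by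
      intro e
      calc d e = ((parts d).sum ⇑l) e := by rw [hl.1]
        _ = _ := by rw [Finset.sum_apply']
    ext B e
    by_cases hB : B ∈ parts d
    · rw [m₀_apply_e hB]
      have hsub : ∀ B' ∈ parts d, ∀ e' ∈ (l B').support, edgeInBlock B' e' :=
        fun B' hB' => (connTerm_cond (hnz B' hB')).1
      by_cases heB : edgeInBlock B e
      · rw [if_pos heB]
        obtain ⟨a, b, hab, hrep⟩ := edge_rep e
        have ha : a ∈ B := ((edgeInBlock_iff hrep).1 heB).1
        rw [hd e, Finset.sum_eq_single_of_mem B hB]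
        intro B' hB' hBne
        by_contra h0
        have heB' : edgeInBlock B' e :=
          hsub B' hB' e (Finsupp.mem_support_iff.2 h0)
        have ha' : a ∈ B' := ((edgeInBlock_iff hrep).1 heB').1
        obtain ⟨C, -, hC⟩ := (isPartition_parts d).2 a
        exact hBne (by rw [hC B' ⟨hB', ha'⟩, hC B ⟨hB, ha⟩])
      · rw [if_neg heB]
        by_contra h0
        exact heB (hsub B hB e (Finsupp.mem_support_iff.2 h0))
    · have h1 : l B = 0 := Finsupp.notMem_support_iff.1 (fun h => hB (hl.2 h))
      have h2 : m₀ d B = 0 := Finsupp.notMem_support_iff.1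
        (fun h => hB (Finsupp.support_onFinset_subset h))
      rw [h1, h2]


end Stmt16Aux

theorem stmt16 (n : ℕ) (hn : 1 ≤ n) :
    ∏ e : EdgeIdx n, expX n e =
      ∑ P ∈ Finset.univ.filter (fun P : Finset (Finset (Fin n)) => IsPartition P),
        ∏ B ∈ P, connTerm n B := by
  apply MvPowerSeries.ext
  intro d
  rw [Stmt16Aux.coeff_lhs, map_sum]
  rw [Finset.sum_eq_single_of_mem (Stmt16Aux.parts d)
    (Finset.mem_filter.2 ⟨Finset.mem_univ _, Stmt16Aux.isPartition_parts d⟩)]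
  · exact (Stmt16Aux.coeff_rhs d).symm
  · intro P hP hPne
    rw [MvPowerSeries.coeff_prod]
    apply Finset.sum_eq_zero
    intro l hl
    by_contra hprod
    apply hPne
    exact Stmt16Aux.partition_eq_parts (Finset.mem_filter.1 hP).2 hl
      (fun B hB h0 => hprod (Finset.prod_eq_zero hB h0))

end
end
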